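/- arXiv:1906.00527 — 5 statements merged into one kernel-verified Lean document; each statement's English description precedes it below -/
import Mathlib

section
/- Let u ∈ C¹(ℝ) with u' ∈ L²(ℝ), and suppose u has finite limits u(-∞) ∈ ℝ as z → -∞ and u(+∞) ∈ ℝ as z → +∞. Then the function Δu defined by (Δu)(z) = Σ_{k∈ℤ} a_k u(z-k) belongs to L²(ℝ), and ∫_ℝ (Δu)(z)·u'(z) dz = 0. -/
open MeasureTheory Filter Real

/-- The nonlocal operator `(Δu)(z) = ∑_{k ∈ ℤ} a_k u(z - k)`. -/
noncomputable def deltaOp (a : ℤ → ℝ) (u : ℝ → ℝ) (z : ℝ) : ℝ :=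
  ∑' k : ℤ, a k * u (z - (k : ℝ))

/-- Hypothesis (H2) on the coupling coefficients. -/
def CoeffH2 (a : ℤ → ℝ) : Prop :=
  Summable (fun k : ℤ => |a k|) ∧ (∑' k : ℤ, a k) = 0 ∧ a 0 < 0 ∧
    (∀ k : ℤ, a k = a (-k)) ∧ Summable (fun k : ℤ => |a k| * (k : ℝ) ^ 2)

/-- Hypothesis (H1) on the nonlinearity `f`. -/
def NonlinH1 (f : ℝ → ℝ) : Prop :=
  ContDiff ℝ 2 f ∧ f 0 = 0 ∧ f 1 = 0 ∧ deriv f 0 < 0 ∧ deriv f 1 < 0 ∧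
    (∫ s in (0:ℝ)..1, f s) = 0 ∧ ∀ u ∈ Set.Ioo (0:ℝ) 1, (∫ s in (0:ℝ)..u, f s) ≠ 0

/-- `u₀` is a heteroclinic solution of `u'' + f(u) = 0` connecting `0` to `1`. -/
def IsHeteroclinic (f u₀ : ℝ → ℝ) : Prop :=
  ContDiff ℝ 2 u₀ ∧ (∀ z : ℝ, deriv (deriv u₀) z + f (u₀ z) = 0) ∧
    Tendsto u₀ atBot (nhds 0) ∧ Tendsto u₀ atTop (nhds 1)

/-- Membership in `H²(ℝ)` (with everywhere-defined derivatives). -/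
def MemH2R (φ : ℝ → ℝ) : Prop :=
  Differentiable ℝ φ ∧ Differentiable ℝ (deriv φ) ∧
    MemLp φ 2 volume ∧ MemLp (deriv φ) 2 volume ∧ MemLp (deriv (deriv φ)) 2 volume

/-- The `L²(ℝ)` norm. -/
noncomputable def L2norm (φ : ℝ → ℝ) : ℝ := (eLpNorm φ 2 volume).toReal

/-- The `H²(ℝ)` norm. -/
noncomputable def H2norm (φ : ℝ → ℝ) : ℝ :=
  L2norm φ + L2norm (deriv φ) + L2norm (deriv (deriv φ))

/-!
Since `∑ a_k = 0`, `Δu = ∑ a_k (u(· - k) - u)`. From `u(z) - u(z - c) = ∫₀^c u'(z - s) ds`,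
Cauchy–Schwarz and Tonelli give `‖u - u(· - c)‖₂ ≤ |c| ‖u'‖₂`; as `|k| ≤ k²`, the series
converges absolutely in `L²`, so `Δu ∈ L²` and it may be paired with `u'` term by term.
The pairing `J(c) = ∫ (u(z - c) - u(z)) u'(z) dz` is odd in `c`: translating `J(-c)` by `c` shows
`J(c) + J(-c) = -∫ w w'` with `w = u - u(· - c)`, which is `0` because `w → 0` at `±∞`.
Since `a_k` is even, `∑ a_k J(k) = 0`.
-/

open Topology Set
open scoped ENNReal

section SeriesInLp

variable {α E ι : Type*} [MeasurableSpace α] {μ : Measure α} [NormedAddCommGroup E] [Countable ι]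
  {f : ι → α → E} {g : α → E} {p : ℝ≥0∞}

theorem eLpNorm_le_tsum_eLpNorm_of_hasSum (hp : 1 ≤ p) (hf : ∀ i, AEStronglyMeasurable (f i) μ)
    (hg : ∀ᵐ x ∂μ, HasSum (f · x) (g x)) : eLpNorm g p μ ≤ ∑' i, eLpNorm (f i) p μ := by
  refine Lp.eLpNorm_le_of_ae_tendsto (u := (atTop : Filter (Finset ι)))
    (f := fun s => ∑ i ∈ s, f i) (Eventually.of_forall fun s => ?_)
    (fun s => Finset.aestronglyMeasurable_sum s fun i _ => hf i) ?_
  · exact (eLpNorm_sum_le (fun i _ => hf i) hp).trans (ENNReal.sum_le_tsum s)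
  · filter_upwards [hg] with x hx
    simp only [Finset.sum_apply]
    exact hx

theorem memLp_of_hasSum (hp : 1 ≤ p) (hf : ∀ i, AEStronglyMeasurable (f i) μ)
    (hsum : ∑' i, eLpNorm (f i) p μ ≠ ∞) (hg : ∀ᵐ x ∂μ, HasSum (f · x) (g x)) : MemLp g p μ := by
  refine ⟨aestronglyMeasurable_of_tendsto_ae (u := (atTop : Filter (Finset ι)))
    (f := fun s => ∑ i ∈ s, f i) (fun s => Finset.aestronglyMeasurable_sum s fun i _ => hf i) ?_,
    (eLpNorm_le_tsum_eLpNorm_of_hasSum hp hf hg).trans_lt hsum.lt_top⟩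
  filter_upwards [hg] with x hx
  simp only [Finset.sum_apply]
  exact hx

theorem integral_mul_eq_tsum_of_hasSum {f : ι → α → ℝ} {g h : α → ℝ}
    (hf : ∀ i, AEStronglyMeasurable (f i) μ) (hsum : ∑' i, eLpNorm (f i) 2 μ ≠ ∞)
    (hg : ∀ᵐ x ∂μ, HasSum (f · x) (g x)) (hh : MemLp h 2 μ) :
    ∫ x, g x * h x ∂μ = ∑' i, ∫ x, f i x * h x ∂μ := by
  have hfh (i : ι) : ∫⁻ x, ‖f i x * h x‖ₑ ∂μ ≤ eLpNorm (f i) 2 μ * eLpNorm h 2 μ := by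
    rw [← eLpNorm_one_eq_lintegral_enorm]
    simpa using eLpNorm_le_eLpNorm_mul_eLpNorm'_of_norm (p := 2) (q := 2) (r := 1) (hf i) hh.1
      (· * ·) 1 (.of_forall fun x => by simp [norm_mul])
  rw [← integral_tsum (f := fun i x => f i x * h x) (fun i => (hf i).mul hh.1)]
  · refine integral_congr_ae ?_
    filter_upwards [hg] with x hx
    exact ((hx.mul_right (h x)).tsum_eq).symm
  · refine ne_top_of_le_ne_top ?_ (ENNReal.tsum_le_tsum hfh)
    rw [ENNReal.tsum_mul_right]
    exact ENNReal.mul_ne_top hsum hh.2.ne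

end SeriesInLp

theorem sq_lintegral_le_measure_univ_mul {α : Type*} [MeasurableSpace α] (μ : Measure α)
    {g : α → ℝ≥0∞} (hg : AEMeasurable g μ) :
    (∫⁻ x, g x ∂μ) ^ 2 ≤ μ univ * ∫⁻ x, g x ^ 2 ∂μ := by
  have h := ENNReal.lintegral_mul_le_Lp_mul_Lq μ Real.HolderConjugate.two_two hg
    (aemeasurable_const (b := (1 : ℝ≥0∞)))
  simp only [Pi.mul_apply, mul_one, ENNReal.one_rpow, lintegral_const, one_mul] at h
  calc (∫⁻ x, g x ∂μ) ^ 2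
      ≤ ((∫⁻ x, g x ^ (2 : ℝ) ∂μ) ^ (1 / 2 : ℝ) * μ univ ^ (1 / 2 : ℝ)) ^ 2 := by gcongr
    _ = μ univ * ∫⁻ x, g x ^ 2 ∂μ := by
      rw [mul_pow, ← ENNReal.rpow_natCast, ← ENNReal.rpow_natCast (_ ^ _), ← ENNReal.rpow_mul,
        ← ENNReal.rpow_mul]
      norm_num [mul_comm]

theorem lintegral_lintegral_comp_sub (ν : Measure ℝ) [SFinite ν] {W : ℝ → ℝ≥0∞}
    (hW : Measurable W) : ∫⁻ z, ∫⁻ s, W (z - s) ∂ν = ν univ * ∫⁻ z, W z := by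
  rw [lintegral_lintegral_swap (f := fun z s => W (z - s)) (hW.comp measurable_sub).aemeasurable]
  simp only [lintegral_sub_right_eq_self, lintegral_const, mul_comm]

theorem integral_mul_deriv_eq_zero_of_tendsto {w w' : ℝ → ℝ} (hw : ∀ x, HasDerivAt w (w' x) x)
    (hint : Integrable (fun x => w x * w' x)) (hbot : Tendsto w atBot (𝓝 0))
    (htop : Tendsto w atTop (𝓝 0)) : ∫ x, w x * w' x = 0 := by
  have hsq (x : ℝ) : HasDerivAt (fun y => w y * w y) (2 * (w x * w' x)) x :=
    ((hw x).fun_mul (hw x)).congr_deriv (by ring)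
  have h := integral_of_hasDerivAt_of_tendsto hsq (hint.const_mul 2)
    (by simpa using hbot.mul hbot) (by simpa using htop.mul htop)
  rw [integral_const_mul, sub_self] at h
  simpa using h

theorem tsum_eq_zero_of_odd {f : ℤ → ℝ} (hf : ∀ k, f (-k) = -f k) : ∑' k, f k = 0 := by
  have h : ∑' k, f k = -∑' k, f k :=
    calc ∑' k, f k = ∑' k, f (-k) := ((Equiv.neg ℤ).tsum_eq f).symm
      _ = ∑' k, -f k := tsum_congr hf
      _ = -∑' k, f k := tsum_neg
  linarith

section ShiftDifference

variable {u : ℝ → ℝ}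

theorem sub_comp_sub_eq_intervalIntegral (hu : ContDiff ℝ 1 u) (z c : ℝ) :
    u z - u (z - c) = ∫ s in 0..c, deriv u (z - s) := by
  rw [intervalIntegral.integral_comp_sub_left (deriv u), sub_zero,
    intervalIntegral.integral_deriv_eq_sub (fun x _ => hu.differentiable one_ne_zero x)
      ((hu.continuous_deriv le_rfl).intervalIntegrable _ _)]

theorem enorm_sub_comp_sub_sq_le (hu : ContDiff ℝ 1 u) (z c : ℝ) :
    ‖u z - u (z - c)‖ₑ ^ 2 ≤ ENNReal.ofReal |c| * ∫⁻ s in uIoc 0 c, ‖deriv u (z - s)‖ₑ ^ 2 := by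
  have hint : ‖u z - u (z - c)‖ₑ ≤ ∫⁻ s in uIoc 0 c, ‖deriv u (z - s)‖ₑ := by
    rw [← ofReal_norm, sub_comp_sub_eq_intervalIntegral hu,
      intervalIntegral.norm_integral_eq_norm_integral_uIoc, ofReal_norm]
    exact enorm_integral_le_lintegral_enorm _
  calc ‖u z - u (z - c)‖ₑ ^ 2 ≤ (∫⁻ s in uIoc 0 c, ‖deriv u (z - s)‖ₑ) ^ 2 := by gcongr
    _ ≤ _ := by
      have := sq_lintegral_le_measure_univ_mul (volume.restrict (uIoc 0 c))
        (g := fun s => ‖deriv u (z - s)‖ₑ) (by fun_prop)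
      simpa [Real.volume_uIoc] using this

theorem lintegral_enorm_sub_comp_sub_sq_le (hu : ContDiff ℝ 1 u) (c : ℝ) :
    ∫⁻ z, ‖u z - u (z - c)‖ₑ ^ 2 ≤ ENNReal.ofReal |c| ^ 2 * ∫⁻ z, ‖deriv u z‖ₑ ^ 2 :=
  calc ∫⁻ z, ‖u z - u (z - c)‖ₑ ^ 2
      ≤ ∫⁻ z, ENNReal.ofReal |c| * ∫⁻ s in uIoc 0 c, ‖deriv u (z - s)‖ₑ ^ 2 :=
        lintegral_mono fun z => enorm_sub_comp_sub_sq_le hu z c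
    _ = ENNReal.ofReal |c| ^ 2 * ∫⁻ z, ‖deriv u z‖ₑ ^ 2 := by
      rw [lintegral_const_mul' _ _ ENNReal.ofReal_ne_top,
        lintegral_lintegral_comp_sub (volume.restrict (uIoc 0 c)) (W := fun t => ‖deriv u t‖ₑ ^ 2)
          ((hu.continuous_deriv le_rfl).measurable.enorm.pow_const 2)]
      simp [Real.volume_uIoc, sq, mul_assoc]

theorem eLpNorm_sub_comp_sub_le (hu : ContDiff ℝ 1 u) (c : ℝ) :
    eLpNorm (fun z => u z - u (z - c)) 2 volume ≤
      ENNReal.ofReal |c| * eLpNorm (deriv u) 2 volume := by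
  have h_sq (f : ℝ → ℝ) : eLpNorm f 2 volume ^ 2 = ∫⁻ z, ‖f z‖ₑ ^ 2 := by
    simpa using eLpNorm_nnreal_pow_eq_lintegral (μ := volume) (f := f) (p := 2) two_ne_zero
  rw [← ENNReal.pow_le_pow_left_iff two_ne_zero, mul_pow, h_sq, h_sq]
  exact lintegral_enorm_sub_comp_sub_sq_le hu c

theorem tendsto_sub_comp_sub_atTop {L : ℝ} (hu : Tendsto u atTop (𝓝 L)) (c : ℝ) :
    Tendsto (fun z => u z - u (z - c)) atTop (𝓝 0) := by
  simpa [sub_eq_add_neg] using hu.sub (hu.comp (tendsto_atTop_add_const_right _ (-c) tendsto_id))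

theorem tendsto_sub_comp_sub_atBot {L : ℝ} (hu : Tendsto u atBot (𝓝 L)) (c : ℝ) :
    Tendsto (fun z => u z - u (z - c)) atBot (𝓝 0) := by
  simpa [sub_eq_add_neg] using hu.sub (hu.comp (tendsto_atBot_add_const_right _ (-c) tendsto_id))

theorem memLp_sub_comp_sub (hu : ContDiff ℝ 1 u) (hu' : MemLp (deriv u) 2 volume) (c : ℝ) :
    MemLp (fun z => u z - u (z - c)) 2 volume :=
  ⟨(hu.continuous.sub (hu.continuous.comp (continuous_sub_right c))).aestronglyMeasurable,
    (eLpNorm_sub_comp_sub_le hu c).trans_lt (ENNReal.mul_lt_top ENNReal.ofReal_lt_top hu'.2)⟩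

theorem integral_comp_add_sub_mul_deriv (hu : ContDiff ℝ 1 u) (hu' : MemLp (deriv u) 2 volume)
    {A B : ℝ} (hA : Tendsto u atBot (𝓝 A)) (hB : Tendsto u atTop (𝓝 B)) (c : ℝ) :
    ∫ z, (u (z + c) - u z) * deriv u z = -∫ z, (u (z - c) - u z) * deriv u z := by
  set w : ℝ → ℝ := fun z => u z - u (z - c)
  have hw : MemLp w 2 volume := memLp_sub_comp_sub hu hu' c
  have hu'c : MemLp (fun z => deriv u (z - c)) 2 volume :=
    hu'.comp_measurePreserving (measurePreserving_sub_right volume c)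
  have hw_deriv (z : ℝ) : HasDerivAt w (deriv u z - deriv u (z - c)) z :=
    (hu.differentiable one_ne_zero z).hasDerivAt.sub
      ((hu.differentiable one_ne_zero (z - c)).hasDerivAt.comp_sub_const z c)
  have h_zero : ∫ z, w z * (deriv u z - deriv u (z - c)) = 0 :=
    integral_mul_deriv_eq_zero_of_tendsto hw_deriv (hw.integrable_mul (hu'.sub hu'c))
      (tendsto_sub_comp_sub_atBot hA c) (tendsto_sub_comp_sub_atTop hB c)
  calc ∫ z, (u (z + c) - u z) * deriv u z = ∫ z, w z * deriv u (z - c) := by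
        rw [← integral_sub_right_eq_self _ c]
        simp [w]
    _ = ∫ z, w z * deriv u z := by
        simp only [mul_sub] at h_zero
        rw [integral_sub (f := fun z => w z * deriv u z) (g := fun z => w z * deriv u (z - c))
          (hw.integrable_mul hu') (hw.integrable_mul hu'c)] at h_zero
        linarith
    _ = -∫ z, (u (z - c) - u z) * deriv u z := by
        rw [← integral_neg]
        congr 1 with z
        ring

theorem hasSum_deltaOp {a : ℤ → ℝ} (ha : Summable fun k => |a k|) (ha0 : ∑' k, a k = 0)
    (hu : Bornology.IsBounded (range u)) (z : ℝ) :
    HasSum (fun k : ℤ => a k * (u (z - k) - u z)) (deltaOp a u z) := by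
  obtain ⟨M, hM⟩ := isBounded_iff_forall_norm_le.1 hu
  have hs : Summable fun k : ℤ => a k * u (z - k) :=
    .of_norm_bounded (ha.mul_right M) fun k => by
      rw [norm_mul]
      exact mul_le_mul_of_nonneg_left (hM _ ⟨_, rfl⟩) (abs_nonneg _)
  simpa [mul_sub, ha0, deltaOp] using
    hs.hasSum.sub ((summable_abs_iff.1 ha).hasSum.mul_right (u z))

theorem tsum_eLpNorm_mul_comp_sub_sub_ne_top {a : ℤ → ℝ}
    (ha : Summable fun k : ℤ => |a k| * (k : ℝ) ^ 2) (hu : ContDiff ℝ 1 u)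
    (hu' : MemLp (deriv u) 2 volume) :
    ∑' k : ℤ, eLpNorm (fun z => a k * (u (z - k) - u z)) 2 volume ≠ ∞ := by
  have hk (k : ℤ) : eLpNorm (fun z => a k * (u (z - k) - u z)) 2 volume ≤
      ENNReal.ofReal (|a k| * (k : ℝ) ^ 2) * eLpNorm (deriv u) 2 volume := by
    have h_neg : (fun z => u (z - k) - u z) = -fun z => u z - u (z - k) := by
      ext; simp
    have h_abs : |(k : ℝ)| ≤ (k : ℝ) ^ 2 := by
      exact_mod_cast (Int.natCast_natAbs k ▸ Int.natAbs_le_self_sq k)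
    calc eLpNorm (fun z => a k * (u (z - k) - u z)) 2 volume
        = ‖a k‖ₑ * eLpNorm (fun z => u (z - k) - u z) 2 volume :=
          eLpNorm_const_smul (a k) _ _ _
      _ = ‖a k‖ₑ * eLpNorm (fun z => u z - u (z - k)) 2 volume := by
          rw [h_neg, eLpNorm_neg]
      _ ≤ ‖a k‖ₑ * (ENNReal.ofReal |(k : ℝ)| * eLpNorm (deriv u) 2 volume) := by
          gcongr
          exact eLpNorm_sub_comp_sub_le hu k
      _ ≤ ENNReal.ofReal (|a k| * (k : ℝ) ^ 2) * eLpNorm (deriv u) 2 volume := by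
          rw [← mul_assoc, ← ofReal_norm, Real.norm_eq_abs,
            ← ENNReal.ofReal_mul (abs_nonneg _)]
          gcongr
  refine ne_top_of_le_ne_top ?_ (ENNReal.tsum_le_tsum hk)
  rw [ENNReal.tsum_mul_right, ← ENNReal.ofReal_tsum_of_nonneg (fun k => by positivity) ha]
  exact ENNReal.mul_ne_top ENNReal.ofReal_ne_top hu'.2.ne

end ShiftDifference

/-- If `u ∈ C¹(ℝ)`, `u' ∈ L²(ℝ)` and `u` has finite limits at `±∞`,
then `Δu ∈ L²(ℝ)` and `(Δu, u') = 0`. -/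
theorem stmt_1 (a : ℤ → ℝ) (ha : CoeffH2 a) (u : ℝ → ℝ) (A B : ℝ)
    (hu : ContDiff ℝ 1 u) (hu' : MemLp (deriv u) 2 volume)
    (hA : Tendsto u atBot (nhds A)) (hB : Tendsto u atTop (nhds B)) :
    MemLp (deltaOp a u) 2 volume ∧ (∫ z : ℝ, deltaOp a u z * deriv u z) = 0 := by
  obtain ⟨ha_abs, ha_sum, -, ha_symm, ha_sq⟩ := ha
  have hu_bdd : Bornology.IsBounded (range u) :=
    hu.continuous.isBounded_range_iff_isBigO_atTop_atBot.2 ⟨hB.isBigO_one ℝ, hA.isBigO_one ℝ⟩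
  set f : ℤ → ℝ → ℝ := fun k z => a k * (u (z - k) - u z)
  have hf_meas (k : ℤ) : AEStronglyMeasurable (f k) volume :=
    (continuous_const.mul ((hu.continuous.comp (continuous_sub_right _)).sub
      hu.continuous)).aestronglyMeasurable
  have hf_norm := tsum_eLpNorm_mul_comp_sub_sub_ne_top ha_sq hu hu'
  have hf_sum : ∀ᵐ z, HasSum (f · z) (deltaOp a u z) :=
    ae_of_all _ (hasSum_deltaOp ha_abs ha_sum hu_bdd)
  refine ⟨memLp_of_hasSum one_le_two hf_meas hf_norm hf_sum, ?_⟩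
  rw [integral_mul_eq_tsum_of_hasSum hf_meas hf_norm hf_sum hu']
  refine tsum_eq_zero_of_odd fun k => ?_
  simp only [f, mul_assoc, integral_const_mul, ← ha_symm k, Int.cast_neg, sub_neg_eq_add,
    integral_comp_add_sub_mul_deriv hu hu' hA hB, mul_neg]
end

section
/- Let u ∈ C¹(ℝ) with u' ∈ L²(ℝ), and suppose u has finite limits at -∞ and at +∞. Then ∫_ℝ (Δu)(z)² dz ≤ (Σ_{k∈ℤ} |a_k|)·(Σ_{k∈ℤ} |a_k|·k²)·‖u'‖²_{L²(ℝ)}; in particular ‖Δu‖_{L²(ℝ)} ≤ C‖u'‖_{L²(ℝ)} with C depending only on the coefficients (a_k). -/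
open MeasureTheory Filter Real
open scoped ENNReal Interval Topology


/-!
Since `∑ a_k = 0`, `(Δu)(z) = ∑ a_k (u(z - k) - u(z))`, and Cauchy–Schwarz with weights `|a_k|`
gives `(Δu)(z)² ≤ (∑ |a_k|) ∑ |a_k| (u(z - k) - u(z))²`. Writing `u(z - k) - u(z)` as an integral
of `u'` over an interval of length `|k|` and applying Cauchy–Schwarz and Fubini once more,
`∫ (u(z - k) - u(z))² dz ≤ k² ‖u'‖²`. Summing over `k` gives the bound. The limits at `±∞` make
`u` bounded, which is what makes the series defining `Δu` converge.
-/

theorem ENNReal.sq_lintegral_le {α : Type*} [MeasurableSpace α] (μ : Measure α)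
    {f : α → ℝ≥0∞} (hf : AEMeasurable f μ) :
    (∫⁻ x, f x ∂μ) ^ 2 ≤ μ Set.univ * ∫⁻ x, f x ^ 2 ∂μ := by
  have h := ENNReal.lintegral_mul_le_Lp_mul_Lq μ Real.HolderConjugate.two_two hf
    (aemeasurable_const (b := (1 : ℝ≥0∞)))
  simp only [Pi.mul_apply, mul_one, ENNReal.one_rpow, lintegral_const, one_mul] at h
  calc (∫⁻ x, f x ∂μ) ^ 2
      ≤ ((∫⁻ x, f x ^ (2 : ℝ) ∂μ) ^ (1 / 2 : ℝ) * μ Set.univ ^ (1 / 2 : ℝ)) ^ 2 := by gcongr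
    _ = μ Set.univ * ∫⁻ x, f x ^ 2 ∂μ := by
      rw [mul_pow, ← ENNReal.rpow_natCast, ← ENNReal.rpow_natCast (_ ^ _), ← ENNReal.rpow_mul,
        ← ENNReal.rpow_mul]
      norm_num [mul_comm]

/-- Weighted Cauchy–Schwarz: the previous lemma for the measure `∑ᵢ wᵢ δᵢ`. -/
theorem ENNReal.sq_tsum_mul_le {ι : Type*} (w f : ι → ℝ≥0∞) :
    (∑' i, w i * f i) ^ 2 ≤ (∑' i, w i) * ∑' i, w i * f i ^ 2 := by
  let _ : MeasurableSpace ι := ⊤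
  simpa [lintegral_withDensity_eq_lintegral_mul _ Measurable.of_discrete Measurable.of_discrete,
    lintegral_count] using
    ENNReal.sq_lintegral_le (Measure.count.withDensity w) (f := f) Measurable.of_discrete.aemeasurable

theorem ENNReal.tsum_enorm_eq_ofReal_tsum_abs {ι : Type*} {f : ι → ℝ}
    (hf : Summable fun i => |f i|) : ∑' i, ‖f i‖ₑ = ENNReal.ofReal (∑' i, |f i|) := by
  simp_rw [ENNReal.ofReal_tsum_of_nonneg (fun i => abs_nonneg (f i)) hf, Real.enorm_eq_ofReal_abs]

theorem eLpNorm_two_sq {α : Type*} [MeasurableSpace α] (μ : Measure α) (f : α → ℝ) :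
    eLpNorm f 2 μ ^ 2 = ∫⁻ x, ‖f x‖ₑ ^ 2 ∂μ := by
  simpa using eLpNorm_nnreal_pow_eq_lintegral (μ := μ) (f := f) (p := 2) two_ne_zero

/-- Both sides are `0` when `f` is not square integrable. -/
theorem integral_sq_eq_toReal_eLpNorm_sq {α : Type*} [MeasurableSpace α] {μ : Measure α}
    {f : α → ℝ} (hf : AEStronglyMeasurable f μ) :
    ∫ x, f x ^ 2 ∂μ = (eLpNorm f 2 μ ^ 2).toReal := by
  rw [integral_eq_lintegral_of_nonneg_ae (ae_of_all _ fun x => sq_nonneg (f x)) (hf.pow 2),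
    eLpNorm_two_sq]
  congr 1
  refine lintegral_congr fun x => ?_
  rw [Real.enorm_eq_ofReal_abs, ← ENNReal.ofReal_pow (abs_nonneg _), sq_abs]

theorem Continuous.exists_forall_norm_le_of_tendsto_atBot_atTop {u : ℝ → ℝ} {A B : ℝ}
    (hu : Continuous u) (hA : Tendsto u atBot (𝓝 A)) (hB : Tendsto u atTop (𝓝 B)) :
    ∃ M, ∀ x, ‖u x‖ ≤ M := by
  obtain ⟨M, hM⟩ := isBounded_iff_forall_norm_le.1
    (hu.isBounded_range_iff_isBigO_atTop_atBot.2 ⟨hB.isBigO_one ℝ, hA.isBigO_one ℝ⟩)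
  exact ⟨M, fun x => hM _ (Set.mem_range_self x)⟩

section Shift

variable {u : ℝ → ℝ}

theorem enorm_comp_sub_sub_sq_le (hu : ContDiff ℝ 1 u) (c z : ℝ) :
    ‖u (z - c) - u z‖ₑ ^ 2 ≤ ‖c‖ₑ * ∫⁻ s in Ι 0 c, ‖deriv u (z - s)‖ₑ ^ 2 := by
  have hftc : ∫ s in 0..c, deriv u (z - s) = u z - u (z - c) := by
    rw [intervalIntegral.integral_comp_sub_left (deriv u), sub_zero,
      intervalIntegral.integral_deriv_eq_sub
        (fun x _ => (hu.differentiable one_ne_zero).differentiableAt)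
        ((hu.continuous_deriv le_rfl).intervalIntegrable _ _)]
  have hle : ‖u (z - c) - u z‖ₑ ≤ ∫⁻ s in Ι 0 c, ‖deriv u (z - s)‖ₑ := by
    rw [enorm_sub_rev, ← hftc, ← ofReal_norm,
      intervalIntegral.norm_integral_eq_norm_integral_uIoc, ofReal_norm]
    exact enorm_integral_le_lintegral_enorm _
  calc ‖u (z - c) - u z‖ₑ ^ 2 ≤ (∫⁻ s in Ι 0 c, ‖deriv u (z - s)‖ₑ) ^ 2 := by gcongr
    _ ≤ volume (Ι 0 c) * ∫⁻ s in Ι 0 c, ‖deriv u (z - s)‖ₑ ^ 2 := by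
      simpa using ENNReal.sq_lintegral_le (volume.restrict (Ι 0 c))
        ((hu.continuous_deriv le_rfl).comp (continuous_const.sub continuous_id)).enorm.aemeasurable
    _ = ‖c‖ₑ * ∫⁻ s in Ι 0 c, ‖deriv u (z - s)‖ₑ ^ 2 := by
      rw [Real.volume_uIoc, sub_zero, Real.enorm_eq_ofReal_abs]

theorem lintegral_enorm_comp_sub_sub_sq_le (hu : ContDiff ℝ 1 u) (c : ℝ) :
    ∫⁻ z, ‖u (z - c) - u z‖ₑ ^ 2 ≤ ‖c‖ₑ ^ 2 * ∫⁻ z, ‖deriv u z‖ₑ ^ 2 := by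
  have hmeas : Measurable fun p : ℝ × ℝ => ‖deriv u (p.1 - p.2)‖ₑ ^ 2 :=
    ((hu.continuous_deriv le_rfl).comp
      (continuous_fst.sub continuous_snd)).enorm.measurable.pow_const 2
  calc ∫⁻ z, ‖u (z - c) - u z‖ₑ ^ 2
      ≤ ∫⁻ z, ‖c‖ₑ * ∫⁻ s in Ι 0 c, ‖deriv u (z - s)‖ₑ ^ 2 :=
        lintegral_mono fun z => enorm_comp_sub_sub_sq_le hu c z
    _ = ‖c‖ₑ * ∫⁻ s in Ι 0 c, ∫⁻ z, ‖deriv u (z - s)‖ₑ ^ 2 := by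
      rw [lintegral_const_mul _ hmeas.lintegral_prod_right',
        lintegral_lintegral_swap hmeas.aemeasurable]
    _ = ‖c‖ₑ ^ 2 * ∫⁻ z, ‖deriv u z‖ₑ ^ 2 := by
      simp_rw [lintegral_sub_right_eq_self (fun z => ‖deriv u z‖ₑ ^ 2)]
      rw [setLIntegral_const, Real.volume_uIoc, sub_zero, ← Real.enorm_eq_ofReal_abs, sq,
        mul_comm _ ‖c‖ₑ, mul_assoc]

end Shift

section DeltaOp

variable {a : ℤ → ℝ} {u : ℝ → ℝ} {M : ℝ}

theorem summable_mul_comp_sub_of_bounded (ha : Summable fun k => |a k|)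
    (hM : ∀ x, ‖u x‖ ≤ M) (z : ℝ) : Summable fun k : ℤ => a k * u (z - k) :=
  Summable.of_norm_bounded (ha.mul_right M) fun k => by
    rw [norm_mul, Real.norm_eq_abs]
    exact mul_le_mul_of_nonneg_left (hM _) (abs_nonneg _)

theorem continuous_deltaOp_of_bounded (ha : Summable fun k => |a k|) (hu : Continuous u)
    (hM : ∀ x, ‖u x‖ ≤ M) : Continuous (deltaOp a u) :=
  continuous_tsum (fun k => continuous_const.mul (hu.comp (continuous_id.sub continuous_const)))
    (ha.mul_right M) fun k z => by
      rw [norm_mul, Real.norm_eq_abs]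
      exact mul_le_mul_of_nonneg_left (hM _) (abs_nonneg _)

theorem deltaOp_eq_tsum_mul_sub (ha : Summable fun k => |a k|) (ha0 : ∑' k, a k = 0)
    (hM : ∀ x, ‖u x‖ ≤ M) (z : ℝ) : deltaOp a u z = ∑' k : ℤ, a k * (u (z - k) - u z) := by
  simp_rw [mul_sub]
  rw [(summable_mul_comp_sub_of_bounded ha hM z).tsum_sub (ha.of_abs.mul_right _),
    tsum_mul_right, ha0, zero_mul, sub_zero, deltaOp]

theorem enorm_deltaOp_sq_le (ha : Summable fun k => |a k|) (ha0 : ∑' k, a k = 0)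
    (hM : ∀ x, ‖u x‖ ≤ M) (z : ℝ) :
    ‖deltaOp a u z‖ₑ ^ 2 ≤ (∑' k, ‖a k‖ₑ) * ∑' k : ℤ, ‖a k‖ₑ * ‖u (z - k) - u z‖ₑ ^ 2 :=
  calc ‖deltaOp a u z‖ₑ ^ 2 ≤ (∑' k : ℤ, ‖a k‖ₑ * ‖u (z - k) - u z‖ₑ) ^ 2 := by
        rw [deltaOp_eq_tsum_mul_sub ha ha0 hM z]
        gcongr
        simpa only [enorm_mul] using
          enorm_tsum_le_tsum_enorm (f := fun k : ℤ => a k * (u (z - k) - u z))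
    _ ≤ _ := ENNReal.sq_tsum_mul_le _ _

theorem eLpNorm_deltaOp_sq_le_of_bounded (ha : Summable fun k => |a k|) (ha0 : ∑' k, a k = 0)
    (ha2 : Summable fun k : ℤ => |a k| * (k : ℝ) ^ 2) (hu : ContDiff ℝ 1 u)
    (hM : ∀ x, ‖u x‖ ≤ M) :
    eLpNorm (deltaOp a u) 2 volume ^ 2 ≤ ENNReal.ofReal (∑' k, |a k|) *
      ENNReal.ofReal (∑' k : ℤ, |a k| * (k : ℝ) ^ 2) * eLpNorm (deriv u) 2 volume ^ 2 := by
  have hmeas (k : ℤ) : Measurable fun z => ‖u (z - k) - u z‖ₑ ^ 2 :=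
    ((hu.continuous.comp (continuous_id.sub continuous_const)).sub
      hu.continuous).enorm.measurable.pow_const 2
  have hweight (k : ℤ) : ‖a k‖ₑ * ‖(k : ℝ)‖ₑ ^ 2 = ENNReal.ofReal (|a k| * (k : ℝ) ^ 2) := by
    rw [Real.enorm_eq_ofReal_abs, Real.enorm_eq_ofReal_abs, ← ENNReal.ofReal_pow (abs_nonneg _),
      ← ENNReal.ofReal_mul (abs_nonneg _), sq_abs]
  rw [eLpNorm_two_sq, eLpNorm_two_sq, ← ENNReal.tsum_enorm_eq_ofReal_tsum_abs ha]
  calc ∫⁻ z, ‖deltaOp a u z‖ₑ ^ 2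
      ≤ ∫⁻ z, (∑' k, ‖a k‖ₑ) * ∑' k : ℤ, ‖a k‖ₑ * ‖u (z - k) - u z‖ₑ ^ 2 :=
        lintegral_mono fun z => enorm_deltaOp_sq_le ha ha0 hM z
    _ = (∑' k, ‖a k‖ₑ) * ∑' k : ℤ, ‖a k‖ₑ * ∫⁻ z, ‖u (z - k) - u z‖ₑ ^ 2 := by
      rw [lintegral_const_mul _ (Measurable.tsum fun k => (hmeas k).const_mul _),
        lintegral_tsum fun k => ((hmeas k).const_mul _).aemeasurable]
      simp_rw [lintegral_const_mul _ (hmeas _)]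
    _ ≤ (∑' k, ‖a k‖ₑ) * ∑' k : ℤ, ‖a k‖ₑ * (‖(k : ℝ)‖ₑ ^ 2 * ∫⁻ z, ‖deriv u z‖ₑ ^ 2) := by
      gcongr with k
      exact lintegral_enorm_comp_sub_sub_sq_le hu k
    _ = _ := by
      simp_rw [← mul_assoc, hweight]
      rw [ENNReal.tsum_mul_right, ← ENNReal.ofReal_tsum_of_nonneg
        (fun k => mul_nonneg (abs_nonneg _) (sq_nonneg _)) ha2, mul_assoc]

end DeltaOp

namespace CoeffH2

variable {a : ℤ → ℝ} {u : ℝ → ℝ} {A B : ℝ}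

theorem tsum_abs_pos (ha : CoeffH2 a) : 0 < ∑' k, |a k| :=
  ha.1.tsum_pos (fun k => abs_nonneg (a k)) 0 (abs_pos.2 ha.2.2.1.ne)

theorem tsum_abs_mul_sq_pos (ha : CoeffH2 a) : 0 < ∑' k : ℤ, |a k| * (k : ℝ) ^ 2 := by
  obtain ⟨-, hsum, h0, -, ha2⟩ := ha
  obtain ⟨k, hk, hak⟩ : ∃ k ≠ 0, a k ≠ 0 := by
    by_contra! h
    exact h0.ne (hsum ▸ (tsum_eq_single 0 h).symm)
  exact ha2.tsum_pos (fun k => mul_nonneg (abs_nonneg _) (sq_nonneg _)) k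
    (mul_pos (abs_pos.2 hak) (by positivity))

theorem continuous_deltaOp (ha : CoeffH2 a) (hu : Continuous u) (hA : Tendsto u atBot (𝓝 A))
    (hB : Tendsto u atTop (𝓝 B)) : Continuous (deltaOp a u) :=
  have ⟨_, hM⟩ := hu.exists_forall_norm_le_of_tendsto_atBot_atTop hA hB
  continuous_deltaOp_of_bounded ha.1 hu hM

theorem eLpNorm_deltaOp_sq_le (ha : CoeffH2 a) (hu : ContDiff ℝ 1 u)
    (hA : Tendsto u atBot (𝓝 A)) (hB : Tendsto u atTop (𝓝 B)) :
    eLpNorm (deltaOp a u) 2 volume ^ 2 ≤ ENNReal.ofReal (∑' k, |a k|) *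
      ENNReal.ofReal (∑' k : ℤ, |a k| * (k : ℝ) ^ 2) * eLpNorm (deriv u) 2 volume ^ 2 :=
  have ⟨_, hM⟩ := hu.continuous.exists_forall_norm_le_of_tendsto_atBot_atTop hA hB
  eLpNorm_deltaOp_sq_le_of_bounded ha.1 ha.2.1 ha.2.2.2.2 hu hM

end CoeffH2

/-- Quantitative `L²` bound for `Δu`:
`∫ (Δu)² ≤ (∑|a_k|)(∑|a_k| k²) ‖u'‖²`, and in particular
`‖Δu‖_{L²} ≤ C ‖u'‖_{L²}` with `C` depending only on the coefficients. -/
theorem stmt_2 (a : ℤ → ℝ) (ha : CoeffH2 a) :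
    (∀ (u : ℝ → ℝ) (A B : ℝ), ContDiff ℝ 1 u → MemLp (deriv u) 2 volume →
      Tendsto u atBot (nhds A) → Tendsto u atTop (nhds B) →
      (∫ z : ℝ, (deltaOp a u z) ^ 2) ≤
        (∑' k : ℤ, |a k|) * (∑' k : ℤ, |a k| * (k : ℝ) ^ 2) * ∫ z : ℝ, (deriv u z) ^ 2) ∧
    ∃ C > (0:ℝ), ∀ (u : ℝ → ℝ) (A B : ℝ), ContDiff ℝ 1 u → MemLp (deriv u) 2 volume →
      Tendsto u atBot (nhds A) → Tendsto u atTop (nhds B) →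
      L2norm (deltaOp a u) ≤ C * L2norm (deriv u) := by
  set S := ∑' k : ℤ, |a k|
  set T := ∑' k : ℤ, |a k| * (k : ℝ) ^ 2
  have hS : 0 < S := ha.tsum_abs_pos
  have hT : 0 < T := ha.tsum_abs_mul_sq_pos
  refine ⟨fun u A B hu hu' hA hB => ?_, √(S * T), sqrt_pos.2 (mul_pos hS hT),
    fun u A B hu hu' hA hB => ?_⟩
  · rw [integral_sq_eq_toReal_eLpNorm_sq
        (ha.continuous_deltaOp hu.continuous hA hB).aestronglyMeasurable,
      integral_sq_eq_toReal_eLpNorm_sq (hu.continuous_deriv le_rfl).aestronglyMeasurable]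
    calc _ ≤ (ENNReal.ofReal S * ENNReal.ofReal T * eLpNorm (deriv u) 2 volume ^ 2).toReal :=
          ENNReal.toReal_mono (by finiteness [hu'.eLpNorm_ne_top])
            (ha.eLpNorm_deltaOp_sq_le hu hA hB)
      _ = S * T * (eLpNorm (deriv u) 2 volume ^ 2).toReal := by
          rw [ENNReal.toReal_mul, ENNReal.toReal_mul, ENNReal.toReal_ofReal hS.le,
            ENNReal.toReal_ofReal hT.le]
  · have hnorm : eLpNorm (deltaOp a u) 2 volume ≤
        ENNReal.ofReal √(S * T) * eLpNorm (deriv u) 2 volume := by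
      rw [← ENNReal.pow_le_pow_left_iff two_ne_zero, mul_pow, ← ENNReal.ofReal_pow (sqrt_nonneg _),
        sq_sqrt (mul_pos hS hT).le, ENNReal.ofReal_mul hS.le]
      exact ha.eLpNorm_deltaOp_sq_le hu hA hB
    calc L2norm (deltaOp a u)
        ≤ (ENNReal.ofReal √(S * T) * eLpNorm (deriv u) 2 volume).toReal :=
          ENNReal.toReal_mono (by finiteness [hu'.eLpNorm_ne_top]) hnorm
      _ = √(S * T) * L2norm (deriv u) := by
          rw [ENNReal.toReal_mul, ENNReal.toReal_ofReal (sqrt_nonneg _), L2norm]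
end

section
/- The derivative u₀' belongs to H²(ℝ), satisfies L⁰(u₀') = 0 (i.e. u₀''' + f'(u₀)·u₀' = 0 on ℝ), and every φ ∈ H²(ℝ) satisfying φ'' + f'(u₀)·φ = 0 is a scalar multiple of u₀'; that is, 0 is a simple eigenvalue of L⁰ with eigenfunction u₀'. -/
open MeasureTheory Filter Real

open Set Topology

/-!
Differentiating `u₀'' = -f(u₀)` gives `L⁰ u₀' = 0` with `u₀''' = -f'(u₀) u₀'`.
Since `u₀' ≥ 0` is the derivative of a function with limits at `±∞`, `u₀' ∈ L¹`; conservation of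
the energy `u₀'² + 2F(u₀)` together with `u₀ ∈ [0, 1]` makes `u₀'` bounded, hence `u₀' ∈ L²`.
Integrating `u₀''² = (u₀' u₀'')' - u₀' u₀'''` over `[-R, R]` bounds `‖u₀''‖₂` uniformly in `R`,
and `|u₀'''| ≤ C |u₀'|`. Simplicity: the Wronskian `φ' u₀' - φ u₀''` of two solutions is constant
and, as a sum of products of `L²` functions, integrable on `ℝ`, so it vanishes; hence
`(φ / u₀')' = 0`.
-/

theorem integrable_of_hasDerivAt_of_nonneg_of_tendsto {g g' : ℝ → ℝ} {a b : ℝ}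
    (hg : ∀ x, HasDerivAt g (g' x) x) (hg' : ∀ x, 0 ≤ g' x)
    (hbot : Tendsto g atBot (𝓝 a)) (htop : Tendsto g atTop (𝓝 b)) : Integrable g' := by
  have hcont : Continuous g := continuous_iff_continuousAt.2 fun x => (hg x).continuousAt
  refine integrable_of_intervalIntegral_norm_tendsto (b - a)
    (fun i => intervalIntegral.integrableOn_deriv_of_nonneg hcont.continuousOn
      (fun x _ => hg x) (fun x _ => hg' x)) tendsto_neg_atTop_atBot tendsto_id ?_
  have hint : ∀ i : ℝ, (∫ x in -i..id i, ‖g' x‖) = g i - g (-i) := fun i => by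
    simp only [Real.norm_of_nonneg (hg' _), id]
    exact intervalIntegral.integral_eq_sub_of_hasDerivAt (fun x _ => hg x)
      (intervalIntegral.intervalIntegrable_deriv_of_nonneg hcont.continuousOn
        (fun x _ => hg x) (fun x _ => hg' x))
  simp only [hint]
  exact htop.sub (hbot.comp tendsto_neg_atTop_atBot)

theorem MeasureTheory.Integrable.memLp_two_of_abs_le {α : Type*} [MeasurableSpace α]
    {μ : Measure α} {g : α → ℝ} {C : ℝ} (hg : Integrable g μ) (hC : ∀ x, |g x| ≤ C) :
    MemLp g 2 μ := by
  refine (memLp_two_iff_integrable_sq hg.aestronglyMeasurable).2 ?_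
  simpa only [sq] using hg.bdd_mul hg.aestronglyMeasurable (Eventually.of_forall hC)

theorem integrable_sq_of_hasDerivAt_of_abs_le {g g' g'' : ℝ → ℝ} {C D : ℝ}
    (hg : ∀ x, HasDerivAt g (g' x) x) (hg' : ∀ x, HasDerivAt g' (g'' x) x)
    (hg''_cont : Continuous g'') (hgC : ∀ x, |g x| ≤ C) (hg'D : ∀ x, |g' x| ≤ D)
    (hint : Integrable fun x => g x * g'' x) : Integrable fun x => g' x ^ 2 := by
  have hg'_cont : Continuous g' := continuous_iff_continuousAt.2 fun x => (hg' x).continuousAt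
  refine integrable_of_intervalIntegral_norm_bounded (2 * C * D + ∫ x, |g x * g'' x|)
    (fun i => (hg'_cont.pow 2).integrableOn_Ioc) tendsto_neg_atTop_atBot tendsto_id
    ((eventually_ge_atTop 0).mono fun i hi => ?_)
  have hparts : (∫ x in -i..i, g' x * g' x) =
      g' i * g i - g' (-i) * g (-i) - ∫ x in -i..i, g'' x * g x :=
    intervalIntegral.integral_mul_deriv_eq_deriv_mul (fun x _ => hg' x) (fun x _ => hg x)
      (hg''_cont.intervalIntegrable _ _) (hg'_cont.intervalIntegrable _ _)
  have hboundary : g' i * g i - g' (-i) * g (-i) ≤ 2 * C * D := by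
    have hprod : ∀ x, |g' x * g x| ≤ C * D := fun x => by
      rw [abs_mul, mul_comm C]
      exact mul_le_mul (hg'D x) (hgC x) (abs_nonneg _) ((abs_nonneg _).trans (hg'D x))
    linarith [le_abs_self (g' i * g i), neg_abs_le (g' (-i) * g (-i)), hprod i, hprod (-i)]
  have hrest : -(∫ x in -i..i, g'' x * g x) ≤ ∫ x, |g x * g'' x| := calc
    -(∫ x in -i..i, g'' x * g x) ≤ ∫ x in -i..i, |g x * g'' x| := by
      refine (neg_le_abs _).trans ?_
      simpa only [mul_comm (g'' _)] using
        intervalIntegral.abs_integral_le_integral_abs (f := fun x => g x * g'' x) (by linarith)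
    _ ≤ ∫ x, |g x * g'' x| := by
      rw [intervalIntegral.integral_of_le (by linarith)]
      exact setIntegral_le_integral hint.abs (Eventually.of_forall fun x => abs_nonneg _)
  simp only [id, sq, Real.norm_eq_abs, abs_mul_self]
  linarith

theorem hasDerivAt_energy {f u u' : ℝ → ℝ} (hf : Continuous f) (hu : ∀ z, HasDerivAt u (u' z) z)
    (hu' : ∀ z, HasDerivAt u' (-f (u z)) z) (z : ℝ) :
    HasDerivAt (fun z => u' z ^ 2 + 2 * ∫ s in (0:ℝ)..u z, f s) 0 z := by
  have hF : HasDerivAt (fun v => ∫ s in (0:ℝ)..v, f s) (f (u z)) (u z) :=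
    intervalIntegral.integral_hasDerivAt_right (hf.intervalIntegrable _ _)
      (hf.stronglyMeasurableAtFilter _ _) hf.continuousAt
  refine (((hu' z).fun_pow 2).add ((hF.comp z (hu z)).const_mul 2)).congr_deriv ?_
  norm_num
  ring

theorem eq_zero_of_integrable_of_hasDerivAt_zero {W : ℝ → ℝ} (hW : ∀ x, HasDerivAt W 0 x)
    (hint : Integrable W) (x : ℝ) : W x = 0 := by
  have hconst : W = fun _ => W 0 := funext fun x =>
    is_const_of_deriv_eq_zero (fun y => (hW y).differentiableAt) (fun y => (hW y).deriv) x 0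
  rw [hconst] at hint ⊢
  refine (integrable_const_iff.1 hint).resolve_right fun h => ?_
  simpa using h.measure_univ_lt_top

theorem wronskian_eq_zero_of_memLp {q φ ψ : ℝ → ℝ}
    (hφ : Differentiable ℝ φ) (hφ' : Differentiable ℝ (deriv φ))
    (hψ : Differentiable ℝ ψ) (hψ' : Differentiable ℝ (deriv ψ))
    (hφeq : ∀ z, deriv (deriv φ) z + q z * φ z = 0) (hψeq : ∀ z, deriv (deriv ψ) z + q z * ψ z = 0)
    (hφ2 : MemLp φ 2) (hφ'2 : MemLp (deriv φ) 2) (hψ2 : MemLp ψ 2) (hψ'2 : MemLp (deriv ψ) 2)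
    (z : ℝ) : deriv φ z * ψ z - φ z * deriv ψ z = 0 := by
  refine eq_zero_of_integrable_of_hasDerivAt_zero (fun x => ?_)
    ((hφ'2.integrable_mul hψ2).sub (hφ2.integrable_mul hψ'2)) z
  refine (((hφ' x).hasDerivAt.mul (hψ x).hasDerivAt).sub
    ((hφ x).hasDerivAt.mul (hψ' x).hasDerivAt)).congr_deriv ?_
  linear_combination ψ x * hφeq x - φ x * hψeq x

theorem exists_eq_const_mul_of_wronskian_eq_zero {φ ψ : ℝ → ℝ} (hφ : Differentiable ℝ φ)
    (hψ : Differentiable ℝ ψ) (hψ0 : ∀ z, ψ z ≠ 0)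
    (hW : ∀ z, deriv φ z * ψ z - φ z * deriv ψ z = 0) : ∃ c, ∀ z, φ z = c * ψ z := by
  have hquot : ∀ z, HasDerivAt (fun z => φ z / ψ z) 0 z := fun z => by
    refine ((hφ z).hasDerivAt.div (hψ z).hasDerivAt (hψ0 z)).congr_deriv ?_
    rw [hW, zero_div]
  refine ⟨φ 0 / ψ 0, fun z => ?_⟩
  rw [← is_const_of_deriv_eq_zero (fun x => (hquot x).differentiableAt)
    (fun x => (hquot x).deriv) z 0, div_mul_cancel₀ _ (hψ0 z)]

namespace IsHeteroclinic

variable {f u₀ : ℝ → ℝ}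

theorem hasDerivAt (hu₀ : IsHeteroclinic f u₀) (z : ℝ) : HasDerivAt u₀ (deriv u₀ z) z :=
  (hu₀.1.differentiable two_ne_zero z).hasDerivAt

theorem hasDerivAt_deriv (hu₀ : IsHeteroclinic f u₀) (z : ℝ) :
    HasDerivAt (deriv u₀) (deriv (deriv u₀) z) z :=
  (hu₀.1.differentiable_deriv_two z).hasDerivAt

theorem deriv_deriv_eq (hu₀ : IsHeteroclinic f u₀) : deriv (deriv u₀) = fun z => -f (u₀ z) :=
  funext fun z => eq_neg_of_add_eq_zero_left (hu₀.2.1 z)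

theorem hasDerivAt_deriv_deriv (hu₀ : IsHeteroclinic f u₀) (hf : Differentiable ℝ f) (z : ℝ) :
    HasDerivAt (deriv (deriv u₀)) (-(deriv f (u₀ z) * deriv u₀ z)) z := by
  rw [hu₀.deriv_deriv_eq]
  exact ((hf _).hasDerivAt.comp z (hu₀.hasDerivAt z)).neg

theorem mem_Icc (hu₀ : IsHeteroclinic f u₀) (hmono : ∀ z, 0 ≤ deriv u₀ z) (z : ℝ) :
    u₀ z ∈ Icc 0 1 :=
  have hu₀_mono := monotone_of_deriv_nonneg (hu₀.1.differentiable two_ne_zero) hmono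
  ⟨hu₀_mono.le_of_tendsto hu₀.2.2.1 z, hu₀_mono.ge_of_tendsto hu₀.2.2.2 z⟩

theorem exists_abs_comp_le (hu₀ : IsHeteroclinic f u₀) (hmono : ∀ z, 0 ≤ deriv u₀ z)
    {g : ℝ → ℝ} (hg : Continuous g) : ∃ C, ∀ z, |g (u₀ z)| ≤ C := by
  obtain ⟨C, hC⟩ := isCompact_Icc.exists_bound_of_continuousOn (hg.continuousOn (s := Icc 0 1))
  exact ⟨C, fun z => hC _ (hu₀.mem_Icc hmono z)⟩

theorem exists_abs_deriv_le (hu₀ : IsHeteroclinic f u₀) (hf : Continuous f)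
    (hmono : ∀ z, 0 ≤ deriv u₀ z) : ∃ C, ∀ z, |deriv u₀ z| ≤ C := by
  set E := fun z => deriv u₀ z ^ 2 + 2 * ∫ s in (0:ℝ)..u₀ z, f s
  have hE : ∀ z, HasDerivAt E 0 z := hasDerivAt_energy hf hu₀.hasDerivAt
    (fun z => by simpa only [hu₀.deriv_deriv_eq] using hu₀.hasDerivAt_deriv z)
  have hE_const : ∀ z, E z = E 0 := fun z =>
    is_const_of_deriv_eq_zero (fun x => (hE x).differentiableAt) (fun x => (hE x).deriv) z 0
  obtain ⟨B, hB⟩ := hu₀.exists_abs_comp_le hmono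
    (intervalIntegral.continuous_primitive (μ := volume) (fun a b => hf.intervalIntegrable a b) 0)
  refine ⟨√(E 0 + 2 * B), fun z => Real.abs_le_sqrt ?_⟩
  have := hE_const z
  linarith [neg_abs_le (∫ s in (0:ℝ)..u₀ z, f s), hB z]

theorem memLp_deriv (hu₀ : IsHeteroclinic f u₀) (hf : Continuous f)
    (hmono : ∀ z, 0 ≤ deriv u₀ z) : MemLp (deriv u₀) 2 :=
  have ⟨_, hC⟩ := hu₀.exists_abs_deriv_le hf hmono
  (integrable_of_hasDerivAt_of_nonneg_of_tendsto hu₀.hasDerivAt hmono hu₀.2.2.1 hu₀.2.2.2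
    ).memLp_two_of_abs_le hC

theorem memLp_deriv_deriv (hu₀ : IsHeteroclinic f u₀) (hf : ContDiff ℝ 1 f)
    (hmono : ∀ z, 0 ≤ deriv u₀ z) : MemLp (deriv (deriv u₀)) 2 := by
  obtain ⟨C, hC⟩ := hu₀.exists_abs_deriv_le hf.continuous hmono
  obtain ⟨D, hD⟩ := hu₀.exists_abs_comp_le hmono hf.continuous
  obtain ⟨M, hM⟩ := hu₀.exists_abs_comp_le hmono (hf.continuous_deriv le_rfl)
  have hf' : Continuous fun z => deriv f (u₀ z) :=
    (hf.continuous_deriv le_rfl).comp hu₀.1.continuous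
  have hu₀' : Continuous (deriv u₀) := hu₀.1.continuous_deriv one_le_two
  have hu₀'' : Continuous (deriv (deriv u₀)) := continuous_iff_continuousAt.2 fun z =>
    (hu₀.hasDerivAt_deriv_deriv (hf.differentiable one_ne_zero) z).continuousAt
  have hu₀'_sq : Integrable fun z => deriv u₀ z ^ 2 :=
    (memLp_two_iff_integrable_sq hu₀'.aestronglyMeasurable).1
      (hu₀.memLp_deriv hf.continuous hmono)
  refine (memLp_two_iff_integrable_sq hu₀''.aestronglyMeasurable).2 <|
    integrable_sq_of_hasDerivAt_of_abs_le hu₀.hasDerivAt_deriv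
      (hu₀.hasDerivAt_deriv_deriv (hf.differentiable one_ne_zero)) (hf'.mul hu₀').neg hC
      (D := D) (fun z => ?_) ?_
  · rw [hu₀.deriv_deriv_eq, abs_neg]
    exact hD z
  · refine (hu₀'_sq.bdd_mul (c := M) (f := fun z => -deriv f (u₀ z))
      hf'.neg.aestronglyMeasurable (Eventually.of_forall fun z => ?_)).congr
      (Eventually.of_forall fun z => ?_)
    · rw [norm_neg, Real.norm_eq_abs]
      exact hM z
    · ring

theorem memLp_deriv_deriv_deriv (hu₀ : IsHeteroclinic f u₀) (hf : ContDiff ℝ 1 f)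
    (hmono : ∀ z, 0 ≤ deriv u₀ z) : MemLp (deriv (deriv (deriv u₀))) 2 := by
  obtain ⟨M, hM⟩ := hu₀.exists_abs_comp_le hmono (hf.continuous_deriv le_rfl)
  have h3 : deriv (deriv (deriv u₀)) = fun z => -(deriv f (u₀ z) * deriv u₀ z) :=
    funext fun z => (hu₀.hasDerivAt_deriv_deriv (hf.differentiable one_ne_zero) z).deriv
  rw [h3]
  refine (hu₀.memLp_deriv hf.continuous hmono).of_le_mul (c := M) ?_
    (Eventually.of_forall fun z => ?_)
  · exact (((hf.continuous_deriv le_rfl).comp hu₀.1.continuous).mul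
      (hu₀.1.continuous_deriv one_le_two)).neg.aestronglyMeasurable
  · rw [norm_neg, norm_mul, Real.norm_eq_abs (deriv f _)]
    exact mul_le_mul_of_nonneg_right (hM z) (norm_nonneg _)

theorem memH2R_deriv (hu₀ : IsHeteroclinic f u₀) (hf : ContDiff ℝ 1 f)
    (hmono : ∀ z, 0 ≤ deriv u₀ z) : MemH2R (deriv u₀) :=
  ⟨hu₀.1.differentiable_deriv_two,
    fun z => (hu₀.hasDerivAt_deriv_deriv (hf.differentiable one_ne_zero) z).differentiableAt,
    hu₀.memLp_deriv hf.continuous hmono, hu₀.memLp_deriv_deriv hf hmono,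
    hu₀.memLp_deriv_deriv_deriv hf hmono⟩

theorem deriv_deriv_deriv_add (hu₀ : IsHeteroclinic f u₀) (hf : Differentiable ℝ f) (z : ℝ) :
    deriv (deriv (deriv u₀)) z + deriv f (u₀ z) * deriv u₀ z = 0 := by
  rw [(hu₀.hasDerivAt_deriv_deriv hf z).deriv, neg_add_cancel]

end IsHeteroclinic

/-- `u₀' ∈ H²(ℝ)`, `L⁰ u₀' = 0`, and `0` is a simple eigenvalue of `L⁰`:
every `φ ∈ H²(ℝ)` with `φ'' + f'(u₀) φ = 0` is a scalar multiple of `u₀'`. -/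
theorem stmt_6 (f u₀ : ℝ → ℝ) (hf : NonlinH1 f) (hu₀ : IsHeteroclinic f u₀)
    (hmono : ∀ z : ℝ, 0 < deriv u₀ z) :
    MemH2R (deriv u₀) ∧
    (∀ z : ℝ, deriv (deriv (deriv u₀)) z + deriv f (u₀ z) * deriv u₀ z = 0) ∧
    ∀ φ : ℝ → ℝ, MemH2R φ → (∀ z : ℝ, deriv (deriv φ) z + deriv f (u₀ z) * φ z = 0) →
      ∃ c : ℝ, ∀ z : ℝ, φ z = c * deriv u₀ z := by
  have hf₁ : ContDiff ℝ 1 f := hf.1.of_le one_le_two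
  have hH2 := hu₀.memH2R_deriv hf₁ fun z => (hmono z).le
  have hode := hu₀.deriv_deriv_deriv_add (hf₁.differentiable one_ne_zero)
  refine ⟨hH2, hode, fun φ ⟨hφ, hφ', hφ_L2, hφ'_L2, _⟩ hφ_ode => ?_⟩
  exact exists_eq_const_mul_of_wronskian_eq_zero hφ hH2.1 (fun z => (hmono z).ne')
    (wronskian_eq_zero_of_memLp hφ hφ' hH2.1 hH2.2.1 hφ_ode hode hφ_L2 hφ'_L2 hH2.2.2.1
      hH2.2.2.2.1)
end

section
/- Let ε ≥ 0, b ∈ ℝ, and let u ∈ C²(ℝ) with u - u₀ ∈ H²(ℝ) satisfy u'' - ε·Δu + f(u) = -b·u₀' on ℝ. Then b·∫_ℝ u₀'(z)·u'(z) dz = 0; i.e., multiplying the equation by u' and integrating over ℝ annihilates the left-hand side (using ∫ u'u'' dz = 0, ∫ f(u)u' dz = F(1) - F(0) = 0, and ∫ (Δu)·u' dz = 0). -/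
/-!
Multiply the equation by `u'` and integrate over `[-R, R]`. Since `u - u₀ ∈ H²`, `u` and `u'`
have the limits of `u₀` and `u₀'` at `±∞`, and `u₀' → 0` by conservation of the energy
`u₀'² / 2 + F(u₀)`. Hence `∫ u'' u' = [u'² / 2] → 0` and `∫ f(u) u' = [F(u)] → F(1) - F(0) = 0`,
while pairing the shifts `k` and `-k` (using `a_k = a_{-k}`) gives
`∫ (Δu) u' → (∑ a_k) (1² - 0²) / 2 = 0`. So the integrals of `b u₀' u'` over `[-R, R]` tend to
`0`, and therefore `b ∫ u₀' u' = 0`.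
-/

open MeasureTheory Filter Real

open Set Topology

theorem tendsto_zero_of_tendsto_sq {α : Type*} {l : Filter α} {g : α → ℝ}
    (h : Tendsto (fun x => g x ^ 2) l (𝓝 0)) : Tendsto g l (𝓝 0) := by
  rw [tendsto_zero_iff_abs_tendsto_zero]
  simpa [Function.comp_def, Real.sqrt_sq_eq_abs] using h.sqrt

theorem exists_forall_abs_le_of_tendsto {φ : ℝ → ℝ} (hφ : Continuous φ) {p q : ℝ}
    (ht : Tendsto φ atTop (𝓝 p)) (hb : Tendsto φ atBot (𝓝 q)) : ∃ C, ∀ x, |φ x| ≤ C := by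
  have hbdd := hφ.isBounded_range_iff_isBigO_atTop_atBot.2 ⟨ht.isBigO_one ℝ, hb.isBigO_one ℝ⟩
  obtain ⟨C, hC⟩ := isBounded_iff_forall_norm_le.1 hbdd
  exact ⟨C, fun x => hC _ (mem_range_self x)⟩

theorem tendsto_zero_of_memLp_two_of_memLp_two_deriv {φ : ℝ → ℝ} (hφ : Differentiable ℝ φ)
    (h : MemLp φ 2 volume) (h' : MemLp (deriv φ) 2 volume) :
    Tendsto φ (atBot ⊔ atTop) (𝓝 0) := by
  have hderiv : ∀ x, HasDerivAt (fun x => φ x ^ 2) (2 * φ x * deriv φ x) x := fun x => by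
    simpa using (hφ x).hasDerivAt.fun_pow 2
  have hint' : Integrable (fun x => 2 * φ x * deriv φ x) := by
    simpa [mul_assoc] using (h.integrable_mul h').const_mul 2
  have hint : Integrable (fun x => φ x ^ 2) := h.integrable_sq
  refine tendsto_zero_of_tendsto_sq (tendsto_sup.2 ⟨?_, ?_⟩)
  · exact tendsto_zero_of_hasDerivAt_of_integrableOn_Iic (a := 0) (fun x _ => hderiv x)
      hint'.integrableOn hint.integrableOn
  · exact tendsto_zero_of_hasDerivAt_of_integrableOn_Ioi (a := 0) (fun x _ => hderiv x)
      hint'.integrableOn hint.integrableOn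

theorem MemH2R.tendsto_zero {φ : ℝ → ℝ} (hφ : MemH2R φ) :
    Tendsto φ (atBot ⊔ atTop) (𝓝 0) ∧ Tendsto (deriv φ) (atBot ⊔ atTop) (𝓝 0) :=
  ⟨tendsto_zero_of_memLp_two_of_memLp_two_deriv hφ.1 hφ.2.2.1 hφ.2.2.2.1,
    tendsto_zero_of_memLp_two_of_memLp_two_deriv hφ.2.1 hφ.2.2.2.1 hφ.2.2.2.2⟩

/-- If `φ` converges at `+∞`, the mean value theorem on `[x, x + 1]` produces points
`ξ x → +∞` with `φ' (ξ x) → 0`; so a limit of `φ'²` can only be `0`. -/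
theorem tendsto_deriv_atTop_of_tendsto_sq_deriv {φ : ℝ → ℝ} (hφ : Differentiable ℝ φ) {p L : ℝ}
    (hp : Tendsto φ atTop (𝓝 p)) (hL : Tendsto (fun x => deriv φ x ^ 2) atTop (𝓝 L)) :
    Tendsto (deriv φ) atTop (𝓝 0) := by
  have hmvt : ∀ x : ℝ, ∃ ξ ∈ Ioo x (x + 1), deriv φ ξ = φ (x + 1) - φ x := fun x => by
    simpa using exists_deriv_eq_slope φ (lt_add_one x) hφ.continuous.continuousOn
      hφ.differentiableOn
  choose ξ hξ hξφ using hmvt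
  have hξ_top : Tendsto ξ atTop atTop := tendsto_atTop_mono (fun x => (hξ x).1.le) tendsto_id
  have hslope : Tendsto (fun x => deriv φ (ξ x) ^ 2) atTop (𝓝 0) := by
    have := ((hp.comp (tendsto_atTop_add_const_right _ 1 tendsto_id)).sub hp).pow 2
    simpa [hξφ] using this
  rw [tendsto_nhds_unique (hL.comp hξ_top) hslope] at hL
  exact tendsto_zero_of_tendsto_sq hL

theorem tendsto_deriv_atBot_of_tendsto_sq_deriv {φ : ℝ → ℝ} (hφ : Differentiable ℝ φ) {p L : ℝ}
    (hp : Tendsto φ atBot (𝓝 p)) (hL : Tendsto (fun x => deriv φ x ^ 2) atBot (𝓝 L)) :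
    Tendsto (deriv φ) atBot (𝓝 0) := by
  have hψ : Differentiable ℝ (fun x => φ (-x)) := hφ.comp differentiable_neg
  have hψ' : ∀ x, deriv (fun x => φ (-x)) x = -deriv φ (-x) := deriv_comp_neg φ
  have h := tendsto_deriv_atTop_of_tendsto_sq_deriv hψ (hp.comp tendsto_neg_atTop_atBot)
    (by simpa [hψ', Function.comp_def] using hL.comp tendsto_neg_atTop_atBot)
  simpa [hψ', Function.comp_def] using (h.comp tendsto_neg_atBot_atTop).neg

/-- Conservation of the energy `u₀'² / 2 + F(u₀)` makes `u₀'²` converge at both ends. -/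
theorem IsHeteroclinic.tendsto_deriv {f u₀ : ℝ → ℝ} (hf : Continuous f)
    (hu₀ : IsHeteroclinic f u₀) : Tendsto (deriv u₀) (atBot ⊔ atTop) (𝓝 0) := by
  obtain ⟨hC2, hode, hbot, htop⟩ := hu₀
  have hd : Differentiable ℝ u₀ := hC2.differentiable two_ne_zero
  have hd' : Differentiable ℝ (deriv u₀) := hC2.differentiable_deriv_two
  set F : ℝ → ℝ := fun y => ∫ s in (0:ℝ)..y, f s
  have hF : ∀ y, HasDerivAt F (f y) y := fun y => hf.integral_hasStrictDerivAt 0 y |>.hasDerivAt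
  have henergy : ∀ z, HasDerivAt (fun z => deriv u₀ z ^ 2 / 2 + F (u₀ z)) 0 z := fun z => by
    have h := (((hd' z).hasDerivAt.fun_pow 2).div_const 2).fun_add
      ((hF (u₀ z)).comp z (hd z).hasDerivAt)
    refine h.congr_deriv ?_
    linear_combination deriv u₀ z * hode z
  set c := deriv u₀ 0 ^ 2 / 2 + F (u₀ 0)
  have hc : (fun z => deriv u₀ z ^ 2) = fun z => 2 * (c - F (u₀ z)) := funext fun z => by
    have := is_const_of_deriv_eq_zero (fun x => (henergy x).differentiableAt)
      (fun x => (henergy x).deriv) z 0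
    linear_combination 2 * this
  have hFc : Continuous F := continuous_iff_continuousAt.2 fun y => (hF y).continuousAt
  have hlim : ∀ {l : Filter ℝ} {y : ℝ}, Tendsto u₀ l (𝓝 y) →
      Tendsto (fun z => deriv u₀ z ^ 2) l (𝓝 (2 * (c - F y))) := fun h => by
    rw [hc]
    exact (((hFc.tendsto _).comp h).const_sub c).const_mul 2
  exact tendsto_sup.2 ⟨tendsto_deriv_atBot_of_tendsto_sq_deriv hd hbot (hlim hbot),
    tendsto_deriv_atTop_of_tendsto_sq_deriv hd htop (hlim htop)⟩

theorem IsHeteroclinic.tendsto_of_memH2R_sub {f u₀ u : ℝ → ℝ} (hf : Continuous f)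
    (hu₀ : IsHeteroclinic f u₀) (hu : Differentiable ℝ u) (hdiff : MemH2R (fun z => u z - u₀ z)) :
    Tendsto u atTop (𝓝 1) ∧ Tendsto u atBot (𝓝 0) ∧ Tendsto (deriv u) (atBot ⊔ atTop) (𝓝 0) := by
  obtain ⟨hw, hw'⟩ := hdiff.tendsto_zero
  rw [show deriv (fun z => u z - u₀ z) = deriv u - deriv u₀ from funext fun z =>
    deriv_fun_sub (hu z) (hu₀.1.differentiable two_ne_zero z)] at hw'
  refine ⟨?_, ?_, ?_⟩
  · simpa using hu₀.2.2.2.add (hw.mono_left le_sup_right)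
  · simpa using hu₀.2.2.1.add (hw.mono_left le_sup_left)
  · simpa using (hu₀.tendsto_deriv hf).add hw'

theorem tendsto_integral_neg_self_of_hasDerivAt {φ φ' : ℝ → ℝ} {p q : ℝ}
    (hderiv : ∀ x, HasDerivAt φ (φ' x) x) (hφ' : Continuous φ')
    (ht : Tendsto φ atTop (𝓝 p)) (hb : Tendsto φ atBot (𝓝 q)) :
    Tendsto (fun R => ∫ x in (-R)..R, φ' x) atTop (𝓝 (p - q)) := by
  simp_rw [intervalIntegral.integral_eq_sub_of_hasDerivAt (fun x _ => hderiv x)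
    (hφ'.intervalIntegrable _ _)]
  exact ht.sub (hb.comp tendsto_neg_atTop_atBot)

theorem tendsto_integral_comp_mul_deriv {g φ : ℝ → ℝ} {p q : ℝ} (hg : Continuous g)
    (hφ : ContDiff ℝ 1 φ) (ht : Tendsto φ atTop (𝓝 p)) (hb : Tendsto φ atBot (𝓝 q)) :
    Tendsto (fun R => ∫ z in (-R)..R, g (φ z) * deriv φ z) atTop (𝓝 (∫ y in q..p, g y)) := by
  have hG : ∀ y, HasDerivAt (fun y => ∫ s in q..y, g s) (g y) y := fun y =>
    (hg.integral_hasStrictDerivAt q y).hasDerivAt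
  have hGc : Continuous fun y => ∫ s in q..y, g s :=
    continuous_iff_continuousAt.2 fun y => (hG y).continuousAt
  simpa using tendsto_integral_neg_self_of_hasDerivAt
    (fun z => (hG (φ z)).comp z ((hφ.differentiable one_ne_zero) z).hasDerivAt)
    ((hg.comp hφ.continuous).mul (hφ.continuous_deriv le_rfl))
    ((hGc.tendsto p).comp ht) ((hGc.tendsto q).comp hb)

theorem tendsto_integral_add_const_of_tendsto_zero {v : ℝ → ℝ} (hv : Continuous v)
    (h0 : Tendsto v (atBot ⊔ atTop) (𝓝 0)) (c : ℝ) :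
    Tendsto (fun R => ∫ z in R..R + c, v z) (atBot ⊔ atTop) (𝓝 0) := by
  obtain ⟨C, hC⟩ := exists_forall_abs_le_of_tendsto hv (h0.mono_left le_sup_right)
    (h0.mono_left le_sup_left)
  have hshift : Tendsto (fun R => ∫ z in (0:ℝ)..c, v (z + R)) (atBot ⊔ atTop)
      (𝓝 (∫ _ in (0:ℝ)..c, (0:ℝ))) := by
    refine intervalIntegral.tendsto_integral_filter_of_dominated_convergence (fun _ => C)
      (.of_forall fun R => (hv.comp (continuous_add_const R)).aestronglyMeasurable)
      (.of_forall fun R => .of_forall fun z _ => hC (z + R)) intervalIntegrable_const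
      (.of_forall fun z _ => h0.comp ?_)
    exact (tendsto_atBot_add_const_left _ z tendsto_id).sup_sup
      (tendsto_atTop_add_const_left _ z tendsto_id)
  simpa [intervalIntegral.integral_comp_add_right, add_comm c] using hshift

theorem summable_deltaOp {a : ℤ → ℝ} {u : ℝ → ℝ} {M : ℝ} (ha : Summable fun k => |a k|)
    (hM : ∀ x, |u x| ≤ M) (z : ℝ) : Summable fun k : ℤ => a k * u (z - k) :=
  (ha.mul_right M).of_norm_bounded fun k => by
    rw [norm_mul, Real.norm_eq_abs, Real.norm_eq_abs]
    exact mul_le_mul_of_nonneg_left (hM _) (abs_nonneg _)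

theorem continuous_deltaOp {a : ℤ → ℝ} {u : ℝ → ℝ} {M : ℝ} (ha : Summable fun k => |a k|)
    (hu : Continuous u) (hM : ∀ x, |u x| ≤ M) : Continuous (deltaOp a u) :=
  continuous_tsum (fun k => continuous_const.mul (hu.comp (continuous_sub_right _)))
    (ha.mul_right M) fun k z => by
      rw [norm_mul, Real.norm_eq_abs, Real.norm_eq_abs]
      exact mul_le_mul_of_nonneg_left (hM _) (abs_nonneg _)

theorem hasSum_integral_deltaOp_mul {a : ℤ → ℝ} {u g : ℝ → ℝ} {M : ℝ}
    (ha : Summable fun k => |a k|) (hu : Continuous u) (hM : ∀ x, |u x| ≤ M)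
    (hg : Continuous g) (s t : ℝ) :
    HasSum (fun k : ℤ => a k * ∫ z in s..t, u (z - k) * g z)
      (∫ z in s..t, deltaOp a u z * g z) := by
  simp_rw [← intervalIntegral.integral_const_mul, ← mul_assoc]
  refine intervalIntegral.hasSum_integral_of_dominated_convergence
    (fun k z => |a k| * M * |g z|)
    (fun k => ((continuous_const.mul (hu.comp (continuous_sub_right _))).mul
      hg).aestronglyMeasurable) (fun k => .of_forall fun z _ => ?_)
    (.of_forall fun z _ => ha.mul_right M |>.mul_right _) ?_
    (.of_forall fun z _ => (summable_deltaOp ha hM z).hasSum.mul_right (g z))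
  · rw [norm_mul, norm_mul, Real.norm_eq_abs, Real.norm_eq_abs, Real.norm_eq_abs]
    gcongr
    exact hM _
  · simp_rw [tsum_mul_right]
    exact (continuous_const.mul hg.abs).intervalIntegrable _ _

noncomputable def shiftIntegral (u : ℝ → ℝ) (c s t : ℝ) : ℝ :=
  ∫ z in s..t, u (z - c) * deriv u z

theorem shiftIntegral_add_shiftIntegral_neg {u : ℝ → ℝ} (hu : ContDiff ℝ 1 u) (c s t : ℝ) :
    shiftIntegral u c s t + shiftIntegral u (-c) s t =
      u (t + c) * u t - u (s + c) * u s + shiftIntegral u c s (s + c)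
        - shiftIntegral u c t (t + c) := by
  have hd : Differentiable ℝ u := hu.differentiable one_ne_zero
  have hd' : Continuous (deriv u) := hu.continuous_deriv le_rfl
  have hibp : shiftIntegral u (-c) s t =
      u (t + c) * u t - u (s + c) * u s - ∫ z in s..t, deriv u (z + c) * u z := by
    simp only [shiftIntegral, sub_neg_eq_add]
    exact intervalIntegral.integral_mul_deriv_eq_deriv_mul
      (fun z _ => (hd (z + c)).hasDerivAt.comp_add_const z c) (fun z _ => (hd z).hasDerivAt)
      ((hd'.comp (continuous_add_const c)).intervalIntegrable _ _) (hd'.intervalIntegrable _ _)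
  have hsubst : (∫ z in s..t, deriv u (z + c) * u z) = shiftIntegral u c (s + c) (t + c) := by
    rw [shiftIntegral, ← intervalIntegral.integral_comp_add_right]
    simp only [add_sub_cancel_right, mul_comm]
  have hint : ∀ p q, IntervalIntegrable (fun z => u (z - c) * deriv u z) volume p q := fun p q =>
    ((hd.continuous.comp (continuous_sub_right c)).mul hd').intervalIntegrable p q
  have h₁ := intervalIntegral.integral_add_adjacent_intervals (hint s t) (hint t (t + c))
  have h₂ := intervalIntegral.integral_add_adjacent_intervals (hint s (s + c))
    (hint (s + c) (t + c))
  simp only [shiftIntegral] at *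
  linarith

theorem abs_shiftIntegral_le {u : ℝ → ℝ} {M M' : ℝ} (hM : ∀ x, |u x| ≤ M)
    (hM' : ∀ x, |deriv u x| ≤ M') (c s t : ℝ) :
    |shiftIntegral u c s t| ≤ M * M' * |t - s| := by
  rw [shiftIntegral, ← Real.norm_eq_abs]
  refine intervalIntegral.norm_integral_le_of_norm_le_const fun z _ => ?_
  rw [norm_mul, Real.norm_eq_abs, Real.norm_eq_abs]
  exact mul_le_mul (hM _) (hM' _) (abs_nonneg _) ((abs_nonneg _).trans (hM 0))

theorem abs_shiftIntegral_add_shiftIntegral_neg_le {u : ℝ → ℝ} (hu : ContDiff ℝ 1 u) {M M' : ℝ}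
    (hM : ∀ x, |u x| ≤ M) (hM' : ∀ x, |deriv u x| ≤ M') (c s t : ℝ) :
    |shiftIntegral u c s t + shiftIntegral u (-c) s t| ≤ 2 * M ^ 2 + 2 * (M * M') * |c| := by
  have hprod : ∀ x y, |u x * u y| ≤ M ^ 2 := fun x y => by
    rw [abs_mul, sq]
    exact mul_le_mul (hM x) (hM y) (abs_nonneg _) ((abs_nonneg _).trans (hM 0))
  have hs := abs_shiftIntegral_le hM hM' c s (s + c)
  have ht := abs_shiftIntegral_le hM hM' c t (t + c)
  simp only [add_sub_cancel_left] at hs ht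
  rw [shiftIntegral_add_shiftIntegral_neg hu]
  have := hprod (t + c) t
  have := hprod (s + c) s
  have := abs_sub (u (t + c) * u t - u (s + c) * u s + shiftIntegral u c s (s + c))
    (shiftIntegral u c t (t + c))
  have := abs_add_le (u (t + c) * u t - u (s + c) * u s) (shiftIntegral u c s (s + c))
  have := abs_sub (u (t + c) * u t) (u (s + c) * u s)
  linarith

theorem tendsto_shiftIntegral_add_shiftIntegral_neg {u : ℝ → ℝ} (hu : ContDiff ℝ 1 u) {p q : ℝ}
    (ht : Tendsto u atTop (𝓝 p)) (hb : Tendsto u atBot (𝓝 q))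
    (hu' : Tendsto (deriv u) (atBot ⊔ atTop) (𝓝 0)) (c : ℝ) :
    Tendsto (fun R => shiftIntegral u c (-R) R + shiftIntegral u (-c) (-R) R) atTop
      (𝓝 (p ^ 2 - q ^ 2)) := by
  have hshift : ∀ {l : Filter ℝ}, Tendsto (fun z => z + c) l l → Tendsto (fun z => z - c) l l →
      ∀ {y : ℝ}, Tendsto u l (𝓝 y) → Tendsto (fun z => u (z + c) * u z) l (𝓝 (y ^ 2)) ∧
        Tendsto (fun z => u (z - c)) l (𝓝 y) := fun hadd hsub y hy =>
    ⟨by simpa [sq] using (hy.comp hadd).mul hy, hy.comp hsub⟩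
  obtain ⟨hprod_top, hsub_top⟩ := hshift (tendsto_atTop_add_const_right _ c tendsto_id)
    (by simpa [sub_eq_add_neg] using tendsto_atTop_add_const_right _ (-c) tendsto_id) ht
  obtain ⟨hprod_bot, hsub_bot⟩ := hshift (tendsto_atBot_add_const_right _ c tendsto_id)
    (by simpa [sub_eq_add_neg] using tendsto_atBot_add_const_right _ (-c) tendsto_id) hb
  have hv : Tendsto (fun z => u (z - c) * deriv u z) (atBot ⊔ atTop) (𝓝 0) := by
    have hbot := hsub_bot.mul (hu'.mono_left le_sup_left)
    have htop := hsub_top.mul (hu'.mono_left le_sup_right)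
    rw [mul_zero] at hbot htop
    exact hbot.sup htop
  have htail := tendsto_integral_add_const_of_tendsto_zero
    ((hu.continuous.comp (continuous_sub_right c)).mul (hu.continuous_deriv le_rfl)) hv c
  have hlim := ((hprod_top.sub (hprod_bot.comp tendsto_neg_atTop_atBot)).add
    ((htail.mono_left le_sup_left).comp tendsto_neg_atTop_atBot)).sub
    (htail.mono_left le_sup_right)
  simp only [add_zero, sub_zero] at hlim
  refine hlim.congr fun R => ?_
  rw [shiftIntegral_add_shiftIntegral_neg hu]
  rfl

theorem HasSum.mul_add_comp_neg {a x : ℤ → ℝ} (hsymm : ∀ k, a k = a (-k)) {S : ℝ}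
    (h : HasSum (fun k => a k * x k) S) : HasSum (fun k => a k * (x k + x (-k))) (2 * S) := by
  have hneg : HasSum (fun k => a k * x (-k)) S := by
    convert (Equiv.neg ℤ).hasSum_iff.2 h using 2 with k
    simp [← hsymm k]
  simpa [mul_add, two_mul] using h.add hneg

theorem summable_abs_mul_abs_of_summable_abs_mul_sq {a : ℤ → ℝ}
    (ha : Summable fun k : ℤ => |a k| * (k : ℝ) ^ 2) : Summable fun k : ℤ => |a k| * |(k : ℝ)| :=
  ha.of_nonneg_of_le (fun k => by positivity) fun k => by
    gcongr
    exact_mod_cast Int.natAbs_le_self_sq k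

/-- Pairing the terms `k` and `-k` of `Δu` turns each into a boundary term plus two integrals
over windows of length `|k|` at `±R`; these are `O(1 + |k|)` uniformly in `R`, so dominated
convergence passes to the limit under the sum. -/
theorem tendsto_integral_deltaOp_mul_deriv {a : ℤ → ℝ} {u : ℝ → ℝ} {p q : ℝ}
    (ha : Summable fun k => |a k|) (ha₁ : Summable fun k : ℤ => |a k| * |(k : ℝ)|)
    (hsymm : ∀ k, a k = a (-k)) (hu : ContDiff ℝ 1 u)
    (ht : Tendsto u atTop (𝓝 p)) (hb : Tendsto u atBot (𝓝 q))
    (hu' : Tendsto (deriv u) (atBot ⊔ atTop) (𝓝 0)) :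
    Tendsto (fun R => ∫ z in (-R)..R, deltaOp a u z * deriv u z) atTop
      (𝓝 ((∑' k, a k) * (p ^ 2 - q ^ 2) / 2)) := by
  obtain ⟨M, hM⟩ := exists_forall_abs_le_of_tendsto hu.continuous ht hb
  obtain ⟨M', hM'⟩ := exists_forall_abs_le_of_tendsto (hu.continuous_deriv le_rfl)
    (hu'.mono_left le_sup_right) (hu'.mono_left le_sup_left)
  set P : ℤ → ℝ → ℝ := fun k R => shiftIntegral u k (-R) R + shiftIntegral u (-k) (-R) R
  have hsum : ∀ R, HasSum (fun k => a k * P k R) (2 * ∫ z in (-R)..R, deltaOp a u z * deriv u z) :=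
    fun R => by
      simpa [P, shiftIntegral] using (hasSum_integral_deltaOp_mul ha hu.continuous hM
        (hu.continuous_deriv le_rfl) (-R) R).mul_add_comp_neg hsymm
  have hbound : Summable fun k : ℤ => |a k| * (2 * M ^ 2 + 2 * (M * M') * |(k : ℝ)|) := by
    simpa [mul_add, mul_left_comm _ (2 * (M * M'))] using
      (ha.mul_right (2 * M ^ 2)).add (ha₁.mul_left (2 * (M * M')))
  have hlim := tendsto_tsum_of_dominated_convergence hbound
    (fun k => (tendsto_shiftIntegral_add_shiftIntegral_neg hu ht hb hu' k).const_mul (a k))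
    (.of_forall fun R k => by
      rw [norm_mul, Real.norm_eq_abs, Real.norm_eq_abs]
      exact mul_le_mul_of_nonneg_left
        (abs_shiftIntegral_add_shiftIntegral_neg_le hu hM hM' _ _ _) (abs_nonneg _))
  rw [tsum_mul_right] at hlim
  refine (hlim.div_const 2).congr fun R => ?_
  rw [(hsum R).tsum_eq]
  ring

theorem integral_eq_zero_of_tendsto_integral_neg_self {g : ℝ → ℝ}
    (h : Tendsto (fun R => ∫ x in (-R)..R, g x) atTop (𝓝 0)) : ∫ x, g x = 0 := by
  -- a non-integrable `g` has Bochner integral `0` by convention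
  by_cases hg : Integrable g
  · exact tendsto_nhds_unique
      (intervalIntegral_tendsto_integral hg tendsto_neg_atTop_atBot tendsto_id) h
  · exact integral_undef hg

theorem tendsto_integral_equation_mul_deriv {a : ℤ → ℝ} {f u : ℝ → ℝ} {p q : ℝ} (ε : ℝ)
    (ha : Summable fun k => |a k|) (ha₁ : Summable fun k : ℤ => |a k| * |(k : ℝ)|)
    (hsymm : ∀ k, a k = a (-k)) (hf : Continuous f) (hu : ContDiff ℝ 2 u)
    (ht : Tendsto u atTop (𝓝 p)) (hb : Tendsto u atBot (𝓝 q))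
    (hu' : Tendsto (deriv u) (atBot ⊔ atTop) (𝓝 0)) :
    Tendsto (fun R => ∫ z in (-R)..R,
        (deriv (deriv u) z - ε * deltaOp a u z + f (u z)) * deriv u z) atTop
      (𝓝 ((∫ y in q..p, f y) - ε * ((∑' k, a k) * (p ^ 2 - q ^ 2) / 2))) := by
  have hu₁ : ContDiff ℝ 1 u := hu.of_le one_le_two
  have hu₁' : ContDiff ℝ 1 (deriv u) := hu.deriv' (n := 1)
  have hkin := tendsto_integral_comp_mul_deriv continuous_id hu₁'
    (hu'.mono_left le_sup_right) (hu'.mono_left le_sup_left)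
  have hpot := tendsto_integral_comp_mul_deriv hf hu₁ ht hb
  have hΔ := tendsto_integral_deltaOp_mul_deriv ha ha₁ hsymm hu₁ ht hb hu'
  have hlim := (hkin.add hpot).sub (hΔ.const_mul ε)
  simp only [id_eq, intervalIntegral.integral_same, zero_add] at hlim
  refine hlim.congr fun R => ?_
  obtain ⟨M, hM⟩ := exists_forall_abs_le_of_tendsto hu₁.continuous ht hb
  have hu'c := hu₁.continuous_deriv le_rfl
  have hkinu : IntervalIntegrable (fun z => deriv u z * deriv (deriv u) z) volume (-R) R :=
    (hu'c.mul (hu₁'.continuous_deriv le_rfl)).intervalIntegrable _ _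
  have hpotu : IntervalIntegrable (fun z => f (u z) * deriv u z) volume (-R) R :=
    ((hf.comp hu₁.continuous).mul hu'c).intervalIntegrable _ _
  have hΔu : IntervalIntegrable (fun z => deltaOp a u z * deriv u z) volume (-R) R :=
    ((continuous_deltaOp ha hu₁.continuous hM).mul hu'c).intervalIntegrable _ _
  rw [← intervalIntegral.integral_const_mul, ← intervalIntegral.integral_add hkinu hpotu,
    ← intervalIntegral.integral_sub (hkinu.add hpotu) (hΔu.const_mul ε)]
  refine intervalIntegral.integral_congr fun z _ => ?_
  ring

theorem stmt_12_general (a : ℤ → ℝ) (f u₀ : ℝ → ℝ)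
    (ha : CoeffH2 a) (hf : NonlinH1 f) (hu₀ : IsHeteroclinic f u₀)
    (ε b : ℝ) (u : ℝ → ℝ) (hu : ContDiff ℝ 2 u)
    (hdiff : MemH2R (fun z => u z - u₀ z))
    (heq : ∀ z : ℝ, deriv (deriv u) z - ε * deltaOp a u z + f (u z) = -b * deriv u₀ z) :
    b * ∫ z : ℝ, deriv u₀ z * deriv u z = 0 := by
  obtain ⟨ha₀, hsum, -, hsymm, ha₂⟩ := ha
  obtain ⟨hf₂, -, -, -, -, hF₁, -⟩ := hf
  obtain ⟨ht, hb, hu'⟩ :=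
    hu₀.tendsto_of_memH2R_sub hf₂.continuous (hu.differentiable two_ne_zero) hdiff
  have hlim := tendsto_integral_equation_mul_deriv ε ha₀
    (summable_abs_mul_abs_of_summable_abs_mul_sq ha₂) hsymm hf₂.continuous hu ht hb hu'
  simp only [heq, hF₁, hsum, zero_mul, zero_div, mul_zero, sub_zero] at hlim
  rw [← integral_const_mul]
  refine integral_eq_zero_of_tendsto_integral_neg_self ?_
  simpa [mul_assoc] using hlim.neg

/-- Multiplying the projected equation `u'' - ε Δu + f(u) = -b u₀'` by `u'` and
integrating over `ℝ` annihilates the left-hand side: `b ∫ u₀' u' = 0`. -/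
theorem stmt_12 (a : ℤ → ℝ) (f u₀ : ℝ → ℝ)
    (ha : CoeffH2 a) (hf : NonlinH1 f) (hu₀ : IsHeteroclinic f u₀)
    (ε b : ℝ) (hε : 0 ≤ ε) (u : ℝ → ℝ) (hu : ContDiff ℝ 2 u)
    (hdiff : MemH2R (fun z => u z - u₀ z))
    (heq : ∀ z : ℝ, deriv (deriv u) z - ε * deltaOp a u z + f (u z) = -b * deriv u₀ z) :
    b * ∫ z : ℝ, deriv u₀ z * deriv u z = 0 :=
  stmt_12_general a f u₀ ha hf hu₀ ε b u hu hdiff heq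
end

section
/- Let u₁ ∈ H²(ℝ) with ∫_ℝ u₁·u₀' dz = 0 satisfy u₁'' + f'(u₀)·u₁ = Δu₀ on ℝ, and set u_ap = u₀ + ε·u₁. Then there exist constants C > 0 and ε₀ > 0, independent of ε, such that for all ε ∈ (0, ε₀] the residual G(ε) := -(u_ap'' - ε·Δu_ap + f(u_ap)) satisfies ‖G(ε)‖_{L²(ℝ)} ≤ C·ε². -/
/-!
Substituting `u₀'' = -f(u₀)` and `u₁'' = Δu₀ - f'(u₀) u₁`, the residual becomes
`-(f(u₀ + εu₁) - f(u₀) - εf'(u₀)u₁) + ε² Δu₁`. Both `u₀` (it has finite limits at `±∞`) and `u₁`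
(it lies in `H¹`) are bounded, so for `ε ≤ 1` the Taylor remainder is at most `K ε² |u₁|`
pointwise, with `K` controlled by `sup |f''|` on a compact interval. Since `∑ₖ |aₖ| < ∞`, `Δ` maps
bounded `L²` functions to `L²`, hence `‖G(ε)‖_{L²} ≤ ε² ‖K |u₁| + |Δu₁|‖_{L²}`.
-/

open MeasureTheory Filter Real

open Topology Set

lemma exists_abs_le_of_tendsto_atBot_atTop {u : ℝ → ℝ} (hu : Continuous u) {l₁ l₂ : ℝ}
    (h₁ : Tendsto u atBot (𝓝 l₁)) (h₂ : Tendsto u atTop (𝓝 l₂)) : ∃ B, ∀ z, |u z| ≤ B := by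
  obtain ⟨B, hB⟩ := isBounded_iff_forall_norm_le.1
    (hu.isBounded_range_iff_isBigO_atTop_atBot.2 ⟨h₂.isBigO_one ℝ, h₁.isBigO_one ℝ⟩)
  exact ⟨B, fun z => hB _ ⟨z, rfl⟩⟩

/-- `φ²` and its derivative `2φφ'` are integrable, so `φ²` tends to `0` at `±∞`. -/
lemma exists_abs_le_of_memLp_two {φ : ℝ → ℝ} (hd : Differentiable ℝ φ)
    (hφ : MemLp φ 2 volume) (hφ' : MemLp (deriv φ) 2 volume) : ∃ B, ∀ z, |φ z| ≤ B := by
  have hsq : Integrable (fun z => φ z ^ 2) volume := hφ.integrable_sq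
  have hsq' : Integrable (fun z => 2 * (φ z * deriv φ z)) volume :=
    (hφ.integrable_mul hφ').const_mul 2
  have hderiv : ∀ z, HasDerivAt (fun y => φ y ^ 2) (2 * (φ z * deriv φ z)) z := fun z => by
    have h : HasDerivAt (fun y => φ y ^ 2) (((2 : ℕ) : ℝ) * φ z ^ (2 - 1) * deriv φ z) z :=
      (hd z).hasDerivAt.pow 2
    convert h using 1
    ring
  obtain ⟨B, hB⟩ := exists_abs_le_of_tendsto_atBot_atTop (continuous_pow 2 |>.comp hd.continuous)
    (tendsto_zero_of_hasDerivAt_of_integrableOn_Iic (a := 0) (fun z _ => hderiv z)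
      hsq'.integrableOn hsq.integrableOn)
    (tendsto_zero_of_hasDerivAt_of_integrableOn_Ioi (a := 0) (fun z _ => hderiv z)
      hsq'.integrableOn hsq.integrableOn)
  exact ⟨√B, fun z => Real.abs_le_sqrt ((le_abs_self _).trans (hB z))⟩

lemma abs_sub_sub_deriv_mul_le_of_convex {f : ℝ → ℝ} (hf : Differentiable ℝ f)
    (hf' : Differentiable ℝ (deriv f)) {s : Set ℝ} (hs : Convex ℝ s) {M : ℝ}
    (hM : ∀ t ∈ s, |deriv (deriv f) t| ≤ M) {x y : ℝ} (hx : x ∈ s) (hy : y ∈ s) :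
    |f y - f x - deriv f x * (y - x)| ≤ M * (y - x) ^ 2 := by
  have hseg : uIcc x y ⊆ s := hs.ordConnected.uIcc_subset hx hy
  have hψ : ∀ t ∈ uIcc x y,
      HasDerivWithinAt (fun t => f t - deriv f x * t) (deriv f t - deriv f x) (uIcc x y) t :=
    fun t _ => ((hf t).hasDerivAt.sub ((hasDerivAt_id t).const_mul _)).hasDerivWithinAt.congr_deriv
      (by simp)
  have hψ' : ∀ t ∈ uIcc x y, ‖deriv f t - deriv f x‖ ≤ M * |y - x| := fun t ht =>
    calc ‖deriv f t - deriv f x‖ ≤ M * ‖t - x‖ :=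
          hs.norm_image_sub_le_of_norm_deriv_le (fun t _ => hf' t) hM hx (hseg ht)
      _ ≤ M * |y - x| := by
          have hM0 : 0 ≤ M := (abs_nonneg _).trans (hM x hx)
          exact mul_le_mul_of_nonneg_left (abs_sub_left_of_mem_uIcc ht) hM0
  have := (convex_uIcc x y).norm_image_sub_le_of_norm_hasDerivWithin_le hψ hψ'
    left_mem_uIcc right_mem_uIcc
  rw [Real.norm_eq_abs, Real.norm_eq_abs] at this
  calc |f y - f x - deriv f x * (y - x)| = |f y - deriv f x * y - (f x - deriv f x * x)| := by
        ring_nf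
    _ ≤ M * |y - x| * |y - x| := this
    _ = M * (y - x) ^ 2 := by rw [mul_assoc, ← abs_mul, ← sq, abs_sq]

lemma exists_abs_sub_sub_deriv_mul_le {f : ℝ → ℝ} (hf : ContDiff ℝ 2 f) (B₀ B₁ : ℝ) :
    ∃ K, ∀ x h ε : ℝ, |x| ≤ B₀ → |h| ≤ B₁ → 0 ≤ ε → ε ≤ 1 →
      |f (x + ε * h) - f x - deriv f x * (ε * h)| ≤ K * ε ^ 2 * |h| := by
  obtain ⟨M, hM⟩ := (isCompact_Icc (a := -(B₀ + B₁)) (b := B₀ + B₁)).exists_bound_of_continuousOn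
    (ContDiff.deriv' (n := 1) hf).continuous_deriv_one.continuousOn
  refine ⟨max M 0 * B₁, fun x h ε hx hh hε hε1 => ?_⟩
  have hεh : |ε * h| ≤ B₁ := by
    rw [abs_mul, abs_of_nonneg hε]; nlinarith [abs_nonneg h]
  have hx' := abs_le.1 hx
  have hεh' := abs_le.1 hεh
  have htaylor := abs_sub_sub_deriv_mul_le_of_convex (hf.differentiable two_ne_zero)
    hf.differentiable_deriv_two (convex_Icc _ _) (fun t ht => (hM t ht).trans (le_max_left M 0))
    (x := x) (y := x + ε * h) ⟨by linarith, by linarith⟩ ⟨by linarith, by linarith⟩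
  rw [add_sub_cancel_left] at htaylor
  calc _ ≤ max M 0 * (ε * h) ^ 2 := htaylor
    _ = max M 0 * ε ^ 2 * (|h| * |h|) := by rw [abs_mul_abs_self]; ring
    _ ≤ max M 0 * ε ^ 2 * (B₁ * |h|) := by gcongr
    _ = max M 0 * B₁ * ε ^ 2 * |h| := by ring

section deltaOp

variable {a : ℤ → ℝ} {u v : ℝ → ℝ}

lemma summable_mul_comp_sub (ha : Summable fun k => |a k|) {B : ℝ} (hB : ∀ z, |u z| ≤ B)
    (z : ℝ) : Summable fun k : ℤ => a k * u (z - k) :=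
  (ha.mul_right B).of_norm_bounded fun k => by
    rw [norm_mul, Real.norm_eq_abs, Real.norm_eq_abs]
    exact mul_le_mul_of_nonneg_left (hB _) (abs_nonneg _)

lemma deltaOp_add_const_mul (hu : ∀ z, Summable fun k : ℤ => a k * u (z - k))
    (hv : ∀ z, Summable fun k : ℤ => a k * v (z - k)) (c z : ℝ) :
    deltaOp a (fun y => u y + c * v y) z = deltaOp a u z + c * deltaOp a v z := by
  simp only [deltaOp, mul_add, mul_left_comm _ c]
  rw [(hu z).tsum_add ((hv z).mul_left c), tsum_mul_left]

lemma aestronglyMeasurable_mul_comp_sub (hu : AEStronglyMeasurable u volume) (k : ℤ) :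
    AEStronglyMeasurable (fun z => a k * u (z - k)) volume :=
  (hu.comp_measurePreserving (measurePreserving_sub_right volume (k : ℝ))).const_mul (a k)

lemma aestronglyMeasurable_deltaOp (hu : AEStronglyMeasurable u volume)
    (hsum : ∀ z, Summable fun k : ℤ => a k * u (z - k)) :
    AEStronglyMeasurable (deltaOp a u) volume :=
  aestronglyMeasurable_of_tendsto_ae (atTop : Filter (Finset ℤ))
    (fun s => s.aestronglyMeasurable_fun_sum fun k _ => aestronglyMeasurable_mul_comp_sub hu k)
    (ae_of_all _ fun z => (hsum z).hasSum)

/-- Minkowski's inequality for the series `∑ₖ aₖ u(· - k)`, whose terms are translates of `u`. -/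
lemma eLpNorm_deltaOp_le (ha : Summable fun k => |a k|) (hu : AEStronglyMeasurable u volume)
    (hsum : ∀ z, Summable fun k : ℤ => a k * u (z - k)) {p : ENNReal} (hp : 1 ≤ p) :
    eLpNorm (deltaOp a u) p volume ≤ ENNReal.ofReal (∑' k, |a k|) * eLpNorm u p volume := by
  refine Lp.eLpNorm_le_of_ae_tendsto (u := (atTop : Filter (Finset ℤ)))
    (Eventually.of_forall fun s => ?_)
    (fun s => s.aestronglyMeasurable_fun_sum fun k _ => aestronglyMeasurable_mul_comp_sub hu k)
    (ae_of_all _ fun z => (hsum z).hasSum)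
  have hterm : ∀ k : ℤ, eLpNorm (fun z => a k * u (z - k)) p volume
      = ENNReal.ofReal |a k| * eLpNorm u p volume := fun k => by
    rw [show (fun z => a k * u (z - k)) = a k • (u ∘ fun z => z - (k : ℝ)) from rfl,
      eLpNorm_const_smul, eLpNorm_comp_measurePreserving hu (measurePreserving_sub_right _ _),
      Real.enorm_eq_ofReal_abs]
  calc eLpNorm (fun z => ∑ k ∈ s, a k * u (z - k)) p volume
      ≤ ∑ k ∈ s, eLpNorm (fun z => a k * u (z - k)) p volume := by
        simpa only [Finset.sum_fn] using eLpNorm_sum_le (s := s)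
          (fun k _ => aestronglyMeasurable_mul_comp_sub hu k) hp
    _ = ENNReal.ofReal (∑ k ∈ s, |a k|) * eLpNorm u p volume := by
        rw [ENNReal.ofReal_sum_of_nonneg fun k _ => abs_nonneg _, Finset.sum_mul]
        exact Finset.sum_congr rfl fun k _ => hterm k
    _ ≤ ENNReal.ofReal (∑' k, |a k|) * eLpNorm u p volume := by
        gcongr
        exact ha.sum_le_tsum s fun k _ => abs_nonneg _

lemma memLp_deltaOp (ha : Summable fun k => |a k|) {p : ENNReal} (hp : 1 ≤ p)
    (hu : MemLp u p volume) (hsum : ∀ z, Summable fun k : ℤ => a k * u (z - k)) :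
    MemLp (deltaOp a u) p volume :=
  ⟨aestronglyMeasurable_deltaOp hu.1 hsum, (eLpNorm_deltaOp_le ha hu.1 hsum hp).trans_lt
    (ENNReal.mul_lt_top ENNReal.ofReal_lt_top hu.2)⟩

end deltaOp

lemma deriv_deriv_add_const_mul {u v : ℝ → ℝ} (hu : Differentiable ℝ u)
    (hu' : Differentiable ℝ (deriv u)) (hv : Differentiable ℝ v) (hv' : Differentiable ℝ (deriv v))
    (c z : ℝ) :
    deriv (deriv fun y => u y + c * v y) z = deriv (deriv u) z + c * deriv (deriv v) z := by
  have h : deriv (fun y => u y + c * v y) = fun y => deriv u y + c * deriv v y := funext fun y => by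
    rw [deriv_fun_add (hu y) ((hv y).const_mul c), deriv_const_mul c (hv y)]
  rw [h, deriv_fun_add (hu' z) ((hv' z).const_mul c), deriv_const_mul c (hv' z)]

lemma residual_eq {a : ℤ → ℝ} {f u₀ u₁ : ℝ → ℝ} (hu₀ : Differentiable ℝ u₀)
    (hu₀' : Differentiable ℝ (deriv u₀)) (hu₁ : Differentiable ℝ u₁)
    (hu₁' : Differentiable ℝ (deriv u₁)) (heq₀ : ∀ z, deriv (deriv u₀) z + f (u₀ z) = 0)
    (heq₁ : ∀ z, deriv (deriv u₁) z + deriv f (u₀ z) * u₁ z = deltaOp a u₀ z)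
    (hs₀ : ∀ z, Summable fun k : ℤ => a k * u₀ (z - k))
    (hs₁ : ∀ z, Summable fun k : ℤ => a k * u₁ (z - k)) (ε z : ℝ) :
    -(deriv (deriv (fun y => u₀ y + ε * u₁ y)) z - ε * deltaOp a (fun y => u₀ y + ε * u₁ y) z
        + f (u₀ z + ε * u₁ z))
      = -(f (u₀ z + ε * u₁ z) - f (u₀ z) - deriv f (u₀ z) * (ε * u₁ z))
        + ε ^ 2 * deltaOp a u₁ z := by
  rw [deriv_deriv_add_const_mul hu₀ hu₀' hu₁ hu₁', deltaOp_add_const_mul hs₀ hs₁]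
  linear_combination (-1) * heq₀ z - ε * heq₁ z

lemma L2norm_le_mul_of_norm_le {φ ψ : ℝ → ℝ} (hψ : MemLp ψ 2 volume) {c : ℝ} (hc : 0 ≤ c)
    (h : ∀ z, ‖φ z‖ ≤ c * ‖ψ z‖) : L2norm φ ≤ c * L2norm ψ := by
  unfold L2norm
  calc (eLpNorm φ 2 volume).toReal ≤ (ENNReal.ofReal c * eLpNorm ψ 2 volume).toReal :=
        ENNReal.toReal_mono (ENNReal.mul_ne_top ENNReal.ofReal_ne_top hψ.2.ne)
          (eLpNorm_le_mul_eLpNorm_of_ae_le_mul (ae_of_all _ h) 2)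
    _ = c * (eLpNorm ψ 2 volume).toReal := by rw [ENNReal.toReal_mul, ENNReal.toReal_ofReal hc]

theorem stmt_13_general (a : ℤ → ℝ) (f u₀ : ℝ → ℝ)
    (ha : CoeffH2 a) (hf : NonlinH1 f) (hu₀ : IsHeteroclinic f u₀)
    (u₁ : ℝ → ℝ) (hu₁ : MemH2R u₁)
    (hequ₁ : ∀ z : ℝ, deriv (deriv u₁) z + deriv f (u₀ z) * u₁ z = deltaOp a u₀ z) :
    ∃ C > (0:ℝ), ∃ ε₀ > (0:ℝ), ∀ ε : ℝ, 0 < ε → ε ≤ ε₀ →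
      L2norm (fun z => -(deriv (deriv (fun y => u₀ y + ε * u₁ y)) z
          - ε * deltaOp a (fun y => u₀ y + ε * u₁ y) z + f (u₀ z + ε * u₁ z)))
        ≤ C * ε ^ 2 := by
  obtain ⟨hu₀C2, heq₀, hu₀bot, hu₀top⟩ := hu₀
  obtain ⟨hu₁d, hu₁d', hu₁L2, hu₁'L2, -⟩ := hu₁
  obtain ⟨B₀, hB₀⟩ := exists_abs_le_of_tendsto_atBot_atTop hu₀C2.continuous hu₀bot hu₀top
  obtain ⟨B₁, hB₁⟩ := exists_abs_le_of_memLp_two hu₁d hu₁L2 hu₁'L2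
  obtain ⟨K, hK⟩ := exists_abs_sub_sub_deriv_mul_le hf.1 B₀ B₁
  have hs₀ := summable_mul_comp_sub ha.1 hB₀
  have hs₁ := summable_mul_comp_sub ha.1 hB₁
  set w : ℝ → ℝ := fun z => K * |u₁ z| + |deltaOp a u₁ z|
  have hw : MemLp w 2 volume :=
    (hu₁L2.abs.const_mul _).add (memLp_deltaOp ha.1 one_le_two hu₁L2 hs₁).abs
  refine ⟨L2norm w + 1, add_pos_of_nonneg_of_pos ENNReal.toReal_nonneg one_pos, 1, one_pos,
    fun ε hε hε1 => ?_⟩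
  calc _ ≤ ε ^ 2 * L2norm w := L2norm_le_mul_of_norm_le hw (sq_nonneg ε) fun z => by
        rw [residual_eq (hu₀C2.differentiable two_ne_zero) hu₀C2.differentiable_deriv_two hu₁d
          hu₁d' heq₀ hequ₁ hs₀ hs₁, Real.norm_eq_abs, Real.norm_eq_abs]
        calc _ ≤ _ := abs_add_le _ _
          _ = |f (u₀ z + ε * u₁ z) - f (u₀ z) - deriv f (u₀ z) * (ε * u₁ z)|
              + ε ^ 2 * |deltaOp a u₁ z| := by rw [abs_neg, abs_mul, abs_of_nonneg (sq_nonneg ε)]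
          _ ≤ ε ^ 2 * w z := by linarith [hK (u₀ z) (u₁ z) ε (hB₀ z) (hB₁ z) hε.le hε1]
          _ ≤ ε ^ 2 * |w z| := by gcongr; exact le_abs_self _
    _ ≤ (L2norm w + 1) * ε ^ 2 := by nlinarith [sq_nonneg ε]

/-- The refined approximation `u_ap = u₀ + ε u₁`, with `u₁` solving
`u₁'' + f'(u₀) u₁ = Δu₀`, has residual `G(ε)` of order `ε²` in `L²(ℝ)`. -/
theorem stmt_13 (a : ℤ → ℝ) (f u₀ : ℝ → ℝ)
    (ha : CoeffH2 a) (hf : NonlinH1 f) (hu₀ : IsHeteroclinic f u₀)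
    (u₁ : ℝ → ℝ) (hu₁ : MemH2R u₁) (horth : (∫ z : ℝ, u₁ z * deriv u₀ z) = 0)
    (hequ₁ : ∀ z : ℝ, deriv (deriv u₁) z + deriv f (u₀ z) * u₁ z = deltaOp a u₀ z) :
    ∃ C > (0:ℝ), ∃ ε₀ > (0:ℝ), ∀ ε : ℝ, 0 < ε → ε ≤ ε₀ →
      L2norm (fun z => -(deriv (deriv (fun y => u₀ y + ε * u₁ y)) z
          - ε * deltaOp a (fun y => u₀ y + ε * u₁ y) z + f (u₀ z + ε * u₁ z)))
        ≤ C * ε ^ 2 :=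
  stmt_13_general a f u₀ ha hf hu₀ u₁ hu₁ hequ₁
end
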